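/- arXiv:2012.02490 — 3 statements merged into one kernel-verified Lean document; each statement's English description precedes it below -/
import Mathlib

section
/- Let φ:ℝ²→[0,∞) be a norm which is C² on ℝ²∖{0} and satisfies the ellipticity condition D²(φ²)(p) ≥ C·Id for all p ≠ 0, for some constant C > 0. Then for every pair of orthogonal unit vectors ν, τ ∈ ℝ² one has D²φ(ν)τ·τ ≥ C̃, where C̃ = C/(2·max{φ(w) : w ∈ S¹}). -/
noncomputable section

open Real Set Filter Function Topology MeasureTheory RealInnerProductSpace

/-- The Euclidean plane. -/
abbrev E2 : Type := EuclideanSpace ℝ (Fin 2)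

/-- The vector `(a, b)` of the plane. -/
def vec2 (a b : ℝ) : E2 := (WithLp.equiv 2 (Fin 2 → ℝ)).symm ![a, b]

/-- Anticlockwise rotation by `π/2`: `(a,b)^⊥ = (-b,a)`. -/
def rot (v : E2) : E2 := vec2 (-(v 1)) (v 0)

/-- The inverse of `rot`: the unit vector `τ` with `rot τ = ν`. -/
def rotInv (v : E2) : E2 := vec2 (v 1) (-(v 0))

/-- The unit normal `ν = (cos θ, sin θ)` associated with the angle `θ`. -/
def nuOf (θ : ℝ) : E2 := vec2 (Real.cos θ) (Real.sin θ)

/-- The unit tangent `τ = (sin θ, -cos θ)` associated with the angle `θ`. -/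
def tauOf (θ : ℝ) : E2 := vec2 (Real.sin θ) (-(Real.cos θ))

/-- `φ` is a norm on `ℝ²`. -/
structure IsNorm (φ : E2 → ℝ) : Prop where
  eq_zero : ∀ x, φ x = 0 ↔ x = 0
  smul : ∀ (c : ℝ) (x : E2), φ (c • x) = |c| * φ x
  triangle : ∀ x y, φ (x + y) ≤ φ x + φ y

/-- A smooth anisotropy: `C^∞` away from the origin. -/
def SmoothAnisotropy (φ : E2 → ℝ) : Prop := ContDiffOn ℝ (⊤ : ℕ∞) φ {(0 : E2)}ᶜ

/-- Second derivative (Hessian) of `φ` at `p`, evaluated on `(v, w)`. -/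
def hess (φ : E2 → ℝ) (p v w : E2) : ℝ := iteratedFDeriv ℝ 2 φ p ![v, w]

/-- Ellipticity: `D²(φ²) ≥ C Id` away from the origin. -/
def EllipticAnisotropy (φ : E2 → ℝ) : Prop :=
  ∃ C > 0, ∀ p : E2, p ≠ 0 → ∀ v : E2, C * ‖v‖ ^ 2 ≤ hess (fun q => φ q ^ 2) p v v

/-- The polar norm `φ°(x) = sup { ξ·x : φ(ξ) ≤ 1 }`. -/
def polarN (φ : E2 → ℝ) (x : E2) : ℝ := sSup {r : ℝ | ∃ ξ : E2, φ ξ ≤ 1 ∧ r = ⟪ξ, x⟫}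

/-- Unit tangent of a curve. -/
def tang (γ : ℝ → E2) (x : ℝ) : E2 := ‖deriv γ x‖⁻¹ • deriv γ x

/-- Unit normal of a curve, `ν = τ^⊥`. -/
def nor (γ : ℝ → E2) (x : ℝ) : E2 := rot (tang γ x)

/-- Scalar curvature, via `τ_s = κ ν`. -/
def curv (γ : ℝ → E2) (x : ℝ) : ℝ := ⟪deriv (tang γ) x, nor γ x⟫ / ‖deriv γ x‖

/-- `ψ = φ°(ν) (D²φ°(ν) τ·τ)` along a curve. -/
def psiC (φo : E2 → ℝ) (γ : ℝ → E2) (x : ℝ) : ℝ :=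
  φo (nor γ x) * hess φo (nor γ x) (tang γ x) (tang γ x)

/-- The anisotropic curvature `κ_φ = ψ κ / φ°(ν)` along a curve. -/
def kphi (φo : E2 → ℝ) (γ : ℝ → E2) (x : ℝ) : ℝ := psiC φo γ x * curv γ x / φo (nor γ x)

/-- Length of a curve parametrized on `[0,1]`. -/
def len (γ : ℝ → E2) : ℝ := ∫ x in (0:ℝ)..1, ‖deriv γ x‖

/-- Integral with respect to arclength `ds = |γ_x| dx`. -/
def aInt (γ : ℝ → E2) (f : ℝ → ℝ) : ℝ := ∫ x in (0:ℝ)..1, f x * ‖deriv γ x‖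

/-- Anisotropic length `∫ φ°(ν) ds`. -/
def lenA (φo : E2 → ℝ) (γ : ℝ → E2) : ℝ := aInt γ (fun x => φo (nor γ x))

/-- Arclength derivative of a scalar function along a curve. -/
def sD (γ : ℝ → E2) (f : ℝ → ℝ) (x : ℝ) : ℝ := deriv f x / ‖deriv γ x‖

/-- Second arclength derivative. -/
def sD2 (γ : ℝ → E2) (f : ℝ → ℝ) (x : ℝ) : ℝ := sD γ (sD γ f) x

/-- Arclength derivative of a vector field along a curve. -/
def sDV (γ : ℝ → E2) (S : ℝ → E2) (x : ℝ) : E2 := ‖deriv γ x‖⁻¹ • deriv S x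

/-- `L²` norm with respect to arclength. -/
def L2a (γ : ℝ → E2) (f : ℝ → ℝ) : ℝ := Real.sqrt (aInt γ (fun x => (f x) ^ 2))

section PD
variable {F : Type*} [NormedAddCommGroup F] [NormedSpace ℝ F]

/-- Partial derivative in time. -/
def dT (u : ℝ → ℝ → F) : ℝ → ℝ → F := fun t x => deriv (fun s => u s x) t

/-- Partial derivative in space. -/
def dX (u : ℝ → ℝ → F) : ℝ → ℝ → F := fun t x => deriv (u t) x

/-- Hölder seminorm bound in the space variable, uniform in time. -/
def HoldX (a : ℝ) (J : Set ℝ) (v : ℝ → ℝ → F) : Prop :=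
  ∃ C : ℝ, ∀ t ∈ J, ∀ x ∈ Icc (0:ℝ) 1, ∀ y ∈ Icc (0:ℝ) 1, ‖v t x - v t y‖ ≤ C * |x - y| ^ a

/-- Hölder seminorm bound in the time variable, uniform in space. -/
def HoldT (a : ℝ) (J : Set ℝ) (v : ℝ → ℝ → F) : Prop :=
  ∃ C : ℝ, ∀ x ∈ Icc (0:ℝ) 1, ∀ t ∈ J, ∀ t' ∈ J, ‖v t x - v t' x‖ ≤ C * |t - t'| ^ a

/-- Membership in the parabolic Hölder space `C^{(2+α)/2, 2+α}(J × [0,1])`. -/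
def PH2 (a : ℝ) (J : Set ℝ) (u : ℝ → ℝ → F) : Prop :=
  ContinuousOn (uncurry u) (J ×ˢ Icc (0:ℝ) 1) ∧
  ContinuousOn (uncurry (dX u)) (J ×ˢ Icc (0:ℝ) 1) ∧
  ContinuousOn (uncurry (dX (dX u))) (J ×ˢ Icc (0:ℝ) 1) ∧
  ContinuousOn (uncurry (dT u)) (J ×ˢ Icc (0:ℝ) 1) ∧
  HoldX a J (dX (dX u)) ∧ HoldX a J (dT u) ∧
  HoldT (a/2) J (dX (dX u)) ∧ HoldT (a/2) J (dT u) ∧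
  HoldT ((1+a)/2) J (dX u)

end PD

/-- Geometric solution of the anisotropic curvature flow of a triod on the time interval `J`. -/
structure GeoSol (φo : E2 → ℝ) (a : ℝ) (J : Set ℝ) (P : Fin 3 → E2)
    (u : Fin 3 → ℝ → ℝ → E2) : Prop where
  regular : ∀ i : Fin 3, ∀ t ∈ J, ∀ x ∈ Icc (0:ℝ) 1, deriv (u i t) x ≠ 0
  reg : ∀ i : Fin 3, PH2 a J (u i)
  motion : ∀ i : Fin 3, ∀ t ∈ J, 0 < t → ∀ x ∈ Ioo (0:ℝ) 1,
    ⟪dT (u i) t x, nor (u i t) x⟫ = psiC φo (u i t) x * curv (u i t) x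
  endpoint : ∀ i : Fin 3, ∀ t ∈ J, u i t 1 = P i
  junction : ∀ t ∈ J, u 0 t 0 = u 1 t 0 ∧ u 1 t 0 = u 2 t 0
  herring : ∀ t ∈ J, ∑ i : Fin 3, gradient φo (nor (u i t) 0) = 0

/-- Geometrically admissible initial network. -/
structure Admissible (φo : E2 → ℝ) (a : ℝ) (P : Fin 3 → E2) (σ : Fin 3 → ℝ → E2) : Prop where
  regular : ∀ i : Fin 3, ∀ x ∈ Icc (0:ℝ) 1, deriv (σ i) x ≠ 0
  c2 : ∀ i : Fin 3, ContDiff ℝ 2 (σ i)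
  hold : ∀ i : Fin 3, ∃ C : ℝ, ∀ x ∈ Icc (0:ℝ) 1, ∀ y ∈ Icc (0:ℝ) 1,
    ‖deriv (deriv (σ i)) x - deriv (deriv (σ i)) y‖ ≤ C * |x - y| ^ a
  endpoint : ∀ i : Fin 3, σ i 1 = P i
  junction : σ 0 0 = σ 1 0 ∧ σ 1 0 = σ 2 0
  herring : ∑ i : Fin 3, gradient φo (nor (σ i) 0) = 0
  flat : ∀ i : Fin 3, kphi φo (σ i) 1 = 0
  velmatch : ∃ l : Fin 3 → ℝ, ∀ i j : Fin 3,
    (psiC φo (σ i) 0 * curv (σ i) 0) • nor (σ i) 0 + l i • tang (σ i) 0 =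
    (psiC φo (σ j) 0 * curv (σ j) 0) • nor (σ j) 0 + l j • tang (σ j) 0

/-- The initial datum `σ` is attained at `t = 0` up to an orientation preserving
`C^{2,α}` reparametrization. -/
def InitialDatum (a : ℝ) (σ : Fin 3 → ℝ → E2) (u : Fin 3 → ℝ → ℝ → E2) : Prop :=
  ∃ ρ : Fin 3 → ℝ → ℝ, ∀ i : Fin 3, ContDiff ℝ 2 (ρ i) ∧ ρ i 0 = 0 ∧ ρ i 1 = 1 ∧
    MapsTo (ρ i) (Icc (0:ℝ) 1) (Icc (0:ℝ) 1) ∧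
    (∀ x ∈ Icc (0:ℝ) 1, 0 < deriv (ρ i) x) ∧
    (∃ C : ℝ, ∀ x ∈ Icc (0:ℝ) 1, ∀ y ∈ Icc (0:ℝ) 1,
      |deriv (deriv (ρ i)) x - deriv (deriv (ρ i)) y| ≤ C * |x - y| ^ a) ∧
    ∀ x ∈ Icc (0:ℝ) 1, u i 0 x = σ i (ρ i x)


set_option maxHeartbeats 1000000

/-- `ell-cond2`: ellipticity of `φ` gives a positive lower bound for the
tangential second derivative `D²φ(ν)τ·τ`. -/
theorem elliptic_hessian_lower_bound
    (φ : E2 → ℝ) (hnorm : IsNorm φ) (hc2 : ContDiffOn ℝ 2 φ {(0 : E2)}ᶜ)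
    (C : ℝ) (hC : 0 < C)
    (hell : ∀ p : E2, p ≠ 0 → ∀ v : E2, C * ‖v‖ ^ 2 ≤ hess (fun q => φ q ^ 2) p v v)
    (ν τ : E2) (hν : ‖ν‖ = 1) (hτ : ‖τ‖ = 1) (horth : ⟪ν, τ⟫ = 0) :
    C / (2 * sSup (φ '' Metric.sphere (0 : E2) 1)) ≤ hess φ ν τ τ := by
  have hν0 : ν ≠ 0 := by intro h; rw [h] at hν; simp at hν
  have hca : ∀ p : E2, p ≠ 0 → ContDiffAt ℝ 2 φ p := fun p hp =>
    hc2.contDiffAt (isOpen_compl_singleton.mem_nhds hp)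
  have hdφ : ∀ p : E2, p ≠ 0 → HasFDerivAt φ (fderiv ℝ φ p) p := fun p hp =>
    ((hca p hp).differentiableAt (by norm_num)).hasFDerivAt
  set D : E2 →L[ℝ] ℝ := fderiv ℝ φ ν with hD
  set A : E2 →L[ℝ] E2 →L[ℝ] ℝ := fderiv ℝ (fderiv ℝ φ) ν with hA
  have hdφ' : HasFDerivAt (fderiv ℝ φ) A ν :=
    (((hca ν hν0).fderiv_right (m := 1) (by norm_num)).differentiableAt (by norm_num)).hasFDerivAt
  -- nonnegativity and positivity of φ
  have hnonneg : ∀ x, 0 ≤ φ x := by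
    intro x
    have h0 : φ 0 = 0 := (hnorm.eq_zero 0).2 rfl
    have := hnorm.triangle x (-x)
    have hneg : φ (-x) = φ x := by
      have := hnorm.smul (-1) x
      simpa using this
    rw [add_neg_cancel, h0, hneg] at this
    linarith
  have hφν : 0 < φ ν := lt_of_le_of_ne (hnonneg ν) (fun h => hν0 ((hnorm.eq_zero ν).1 h.symm))
  -- curve t ↦ t • ν
  have hc : HasDerivAt (fun t : ℝ => t • ν) ν 1 := by
    simpa using (hasDerivAt_id (1:ℝ)).smul_const ν
  have hpos : ∀ᶠ t : ℝ in 𝓝 1, (0:ℝ) < t := eventually_gt_nhds one_pos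
  -- Euler: D ν = φ ν
  have hEuler : D ν = φ ν := by
    have h1 : HasDerivAt (fun t : ℝ => φ (t • ν)) (D ν) 1 := by
      have h0 : HasFDerivAt φ D ((1:ℝ) • ν) := by simpa using hdφ ν hν0
      exact h0.comp_hasDerivAt 1 hc
    have hev : (fun t : ℝ => t * φ ν) =ᶠ[𝓝 1] (fun t : ℝ => φ (t • ν)) := by
      filter_upwards [hpos] with t ht
      rw [hnorm.smul, abs_of_pos ht]
    have h2 : HasDerivAt (fun t : ℝ => t * φ ν) (D ν) 1 := h1.congr_of_eventuallyEq hev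
    have h3 : HasDerivAt (fun t : ℝ => t * φ ν) (φ ν) 1 := hasDerivAt_mul_const (φ ν)
    exact h2.unique h3
  -- 0-homogeneity of the gradient
  have hhom : ∀ t : ℝ, 0 < t → fderiv ℝ φ (t • ν) = D := by
    intro t ht
    have htν : t • ν ≠ 0 := smul_ne_zero (ne_of_gt ht) hν0
    have hL : HasFDerivAt (fun x : E2 => t • x) (t • (ContinuousLinearMap.id ℝ E2)) ν := by
      exact ((ContinuousLinearMap.id ℝ E2).hasFDerivAt.const_smul t)
    have h1 : HasFDerivAt (fun x : E2 => φ (t • x))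
        ((fderiv ℝ φ (t • ν)).comp (t • (ContinuousLinearMap.id ℝ E2))) ν :=
      (hdφ _ htν).comp ν hL
    have h2 : HasFDerivAt (fun x : E2 => φ (t • x)) (t • D) ν := by
      have heq : (fun x : E2 => φ (t • x)) = fun x : E2 => t • φ x := by
        funext x; rw [hnorm.smul, abs_of_pos ht]; rfl
      rw [heq]
      exact (hdφ ν hν0).const_smul t
    have h3 := h1.unique h2
    have h4 : ∀ w : E2, t * fderiv ℝ φ (t • ν) w = t * D w := by
      intro w
      have := DFunLike.congr_fun h3 w
      simpa [ContinuousLinearMap.smul_apply, smul_eq_mul] using this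
    ext w
    have := h4 w
    exact mul_left_cancel₀ (ne_of_gt ht) this
  -- A ν = 0
  have hAν : A ν = 0 := by
    have h1 : HasDerivAt (fun t : ℝ => fderiv ℝ φ (t • ν)) (A ν) 1 := by
      have h0 : HasFDerivAt (fderiv ℝ φ) A ((1:ℝ) • ν) := by simpa using hdφ'
      exact h0.comp_hasDerivAt 1 hc
    have hev : (fun _ : ℝ => D) =ᶠ[𝓝 1] (fun t : ℝ => fderiv ℝ φ (t • ν)) := by
      filter_upwards [hpos] with t ht
      exact (hhom t ht).symm
    have h2 : HasDerivAt (fun _ : ℝ => D) (A ν) 1 := h1.congr_of_eventuallyEq hev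
    have h3 : HasDerivAt (fun _ : ℝ => D) (0 : E2 →L[ℝ] ℝ) 1 := hasDerivAt_const 1 D
    exact h2.unique h3
  -- symmetry of A
  have hsymm : ∀ v w : E2, A v w = A w v := by
    intro v w
    refine second_derivative_symmetric_of_eventually (f := φ) ?_ hdφ' v w
    filter_upwards [isOpen_compl_singleton.mem_nhds hν0] with y hy
    exact hdφ y hy
  -- second derivative of φ² at ν
  have hg : ∀ y : E2, y ≠ 0 →
      HasFDerivAt (fun q => φ q ^ 2) ((2 * φ y) • fderiv ℝ φ y) y := by
    intro y hy
    have := (hdφ y hy).mul (hdφ y hy)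
    have heq : (fun q => φ q ^ 2) = fun q => φ q * φ q := by funext q; ring
    rw [heq]
    exact this.congr_fderiv (by rw [two_mul, add_smul])
  set B : E2 →L[ℝ] E2 →L[ℝ] ℝ :=
    (2 * φ ν) • A + ((2:ℝ) • D).smulRight D with hB
  have hgB : HasFDerivAt (fderiv ℝ (fun q => φ q ^ 2)) B ν := by
    have h1 : HasFDerivAt (fun y => (2 * φ y) • fderiv ℝ φ y) B ν := by
      have hcφ : HasFDerivAt (fun y => 2 * φ y) ((2:ℝ) • D) ν := (hdφ ν hν0).const_mul 2
      exact hcφ.smul hdφ'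
    refine h1.congr_of_eventuallyEq ?_
    filter_upwards [isOpen_compl_singleton.mem_nhds hν0] with y hy
    exact (hg y hy).fderiv
  -- hess identities
  have hhessφ : hess φ ν τ τ = A τ τ := by
    rw [hess, iteratedFDeriv_two_apply]
    simp [hA]
  set lam : ℝ := D τ / φ ν with hlam
  set v : E2 := τ - lam • ν with hv
  have hDv : D v = 0 := by
    rw [hv]
    simp only [map_sub, _root_.map_smul, smul_eq_mul, hEuler, hlam]
    field_simp
    ring
  have hAvv : A v v = A τ τ := by
    have hAντ : A ν τ = 0 := by rw [hAν]; rfl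
    have hAνν : A ν ν = 0 := by rw [hAν]; rfl
    have hAτν : A τ ν = 0 := by rw [hsymm τ ν, hAντ]
    rw [hv]
    simp only [map_sub, _root_.map_smul, ContinuousLinearMap.sub_apply, ContinuousLinearMap.smul_apply,
      smul_eq_mul, hAντ, hAνν, hAτν]
    ring
  have hBvv : B v v = 2 * φ ν * A τ τ := by
    rw [hB]
    simp only [ContinuousLinearMap.add_apply, ContinuousLinearMap.smul_apply,
      ContinuousLinearMap.smulRight_apply, smul_eq_mul, hDv, hAvv]
    ring
  have hhessg : hess (fun q => φ q ^ 2) ν v v = B v v := by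
    rw [hess, iteratedFDeriv_two_apply, hgB.fderiv]
    simp
  -- norm of v
  have hnv : 1 ≤ ‖v‖ ^ 2 := by
    have hvv : ‖v‖ ^ 2 = 1 + lam ^ 2 := by
      have h2 : ⟪τ, ν⟫ = 0 := by rw [real_inner_comm]; exact horth
      rw [hv, norm_sub_sq_real, real_inner_smul_right, h2,
        norm_smul, hτ, hν, Real.norm_eq_abs, mul_pow, sq_abs]
      ring
    rw [hvv]
    nlinarith [sq_nonneg lam]
  -- combine
  have hkey : C ≤ 2 * φ ν * A τ τ := by
    have h1 := hell ν hν0 v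
    rw [hhessg, hBvv] at h1
    have h2 : C * 1 ≤ C * ‖v‖ ^ 2 := mul_le_mul_of_nonneg_left hnv hC.le
    linarith
  have hH : 0 < A τ τ := by
    rcases lt_or_ge 0 (A τ τ) with h | h
    · exact h
    · exfalso
      have hmul : 2 * φ ν * A τ τ ≤ 0 :=
        mul_nonpos_of_nonneg_of_nonpos (by linarith) h
      linarith
  -- sup bound
  set M : ℝ := sSup (φ '' Metric.sphere (0 : E2) 1) with hM
  have hMb : φ ν ≤ M := by
    apply le_csSup
    · apply (isCompact_sphere (0:E2) 1).bddAbove_image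
      apply hc2.continuousOn.mono
      intro x hx
      simp only [Metric.mem_sphere, dist_zero_right] at hx
      intro h; rw [Set.mem_singleton_iff] at h; rw [h] at hx; simp at hx
    · exact ⟨ν, by simp [hν], rfl⟩
  have hM0 : 0 < M := lt_of_lt_of_le hφν hMb
  rw [hhessφ, div_le_iff₀ (by linarith : (0:ℝ) < 2 * M)]
  have h3 : 2 * φ ν * A τ τ ≤ 2 * M * A τ τ :=
    mul_le_mul_of_nonneg_right (by linarith) hH.le
  have h4 : A τ τ * (2 * M) = 2 * M * A τ τ := by ring
  linarith


end
end

section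
/- Let φ be a smooth elliptic anisotropy with polar norm φ°. Then there exist constants C̄ ∈ [0,1) and a₀ > 0, depending only on φ°, with the following property: whenever ν¹, ν², ν³ ∈ ℝ² are unit vectors satisfying Σ_{i=1}^3 Dφ°(ν^i) = 0, one has |ν^i·ν^j| ≤ C̄ < 1 for all i ≠ j, and consequently |ν^i·τ^j| ≥ a₀ > 0 for all i ≠ j, where τ^j is the unit vector with ν^j = (τ^j)^⊥. -/
noncomputable section

open Real Set Filter Function Topology MeasureTheory RealInnerProductSpace

section AuxHerring
open Metric

variable {φ : E2 → ℝ}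

lemma IsNorm.zero (h : IsNorm φ) : φ 0 = 0 := (h.eq_zero 0).2 rfl

lemma IsNorm.nneg (h : IsNorm φ) (x : E2) : 0 ≤ φ x := by
  have h1 : φ (-x) = φ x := by
    have := h.smul (-1) x; simpa using this
  have h2 : (0:ℝ) ≤ φ x + φ (-x) := by
    have := h.triangle x (-x); simp [h.zero] at this; linarith [this]
  linarith [h1 ▸ h2]

lemma coord_abs_le (y : E2) (i : Fin 2) : |y i| ≤ ‖y‖ := by
  rw [EuclideanSpace.norm_eq, Fin.sum_univ_two]
  rw [← Real.sqrt_sq_eq_abs]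
  apply Real.sqrt_le_sqrt
  fin_cases i <;> simp [Real.norm_eq_abs, sq_abs] <;> nlinarith [sq_nonneg (y 0), sq_nonneg (y 1)]

lemma decomp (y : E2) : y = y 0 • vec2 1 0 + y 1 • vec2 0 1 := by
  ext i
  fin_cases i <;>
    simp [vec2, PiLp.add_apply, PiLp.smul_apply]

lemma IsNorm.upper (h : IsNorm φ) : ∃ M, 0 < M ∧ ∀ y, φ y ≤ M * ‖y‖ := by
  refine ⟨φ (vec2 1 0) + φ (vec2 0 1) + 1,
    by have := h.nneg (vec2 1 0); have := h.nneg (vec2 0 1); linarith, fun y => ?_⟩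
  have hd := decomp y
  calc φ y = φ (y 0 • vec2 1 0 + y 1 • vec2 0 1) := by rw [← hd]
    _ ≤ φ (y 0 • vec2 1 0) + φ (y 1 • vec2 0 1) := h.triangle _ _
    _ = |y 0| * φ (vec2 1 0) + |y 1| * φ (vec2 0 1) := by rw [h.smul, h.smul]
    _ ≤ ‖y‖ * φ (vec2 1 0) + ‖y‖ * φ (vec2 0 1) := by
        have n0 := h.nneg (vec2 1 0); have n1 := h.nneg (vec2 0 1)
        have c0 := coord_abs_le y 0; have c1 := coord_abs_le y 1
        nlinarith [abs_nonneg (y 0), abs_nonneg (y 1)]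
    _ ≤ (φ (vec2 1 0) + φ (vec2 0 1) + 1) * ‖y‖ := by nlinarith [norm_nonneg y]

lemma IsNorm.lipschitz (h : IsNorm φ) {M : ℝ} (hM : ∀ y, φ y ≤ M * ‖y‖) (a b : E2) :
    |φ a - φ b| ≤ M * ‖a - b‖ := by
  have hneg : ∀ x : E2, φ (-x) = φ x := fun x => by simpa using h.smul (-1) x
  have t1 : φ a - φ b ≤ φ (a - b) := by
    have := h.triangle (a - b) b; simp at this; linarith
  have t2 : φ b - φ a ≤ φ (a - b) := by
    have := h.triangle (b - a) a; simp at this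
    have : φ b ≤ φ (b - a) + φ a := this
    have e : φ (b - a) = φ (a - b) := by rw [← hneg (a - b), neg_sub]
    linarith [e ▸ this]
  have := hM (a - b)
  rw [abs_le]; constructor <;> linarith

lemma IsNorm.continuous (h : IsNorm φ) : Continuous φ := by
  obtain ⟨M, hM0, hM⟩ := h.upper
  refine (LipschitzWith.of_dist_le_mul (K := Real.toNNReal M) fun a b => ?_).continuous
  rw [Real.dist_eq, dist_eq_norm, Real.coe_toNNReal _ hM0.le]
  exact h.lipschitz hM a b

lemma IsNorm.lower (h : IsNorm φ) : ∃ m, 0 < m ∧ ∀ y, m * ‖y‖ ≤ φ y := by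
  obtain ⟨z, hz, hzmin⟩ := (isCompact_sphere (0:E2) 1).exists_isMinOn
    (NormedSpace.sphere_nonempty.2 zero_le_one) h.continuous.continuousOn
  have hz1 : ‖z‖ = 1 := by simpa using mem_sphere_zero_iff_norm.1 hz
  have hz0 : z ≠ 0 := by intro e; rw [e] at hz1; simp at hz1
  have hm : 0 < φ z := lt_of_le_of_ne (h.nneg z) fun e => hz0 ((h.eq_zero z).1 e.symm)
  refine ⟨φ z, hm, fun y => ?_⟩
  rcases eq_or_ne y 0 with rfl | hy
  · simp [h.zero]
  · have hy' : (0:ℝ) < ‖y‖ := norm_pos_iff.2 hy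
    have hu : (‖y‖⁻¹ • y) ∈ sphere (0:E2) 1 := by
      simp [norm_smul, abs_of_pos (inv_pos.2 hy'), inv_mul_cancel₀ hy'.ne']
    have := hzmin hu
    have e : φ (‖y‖⁻¹ • y) = ‖y‖⁻¹ * φ y := by
      rw [h.smul]; rw [abs_of_pos (inv_pos.2 hy')]
    simp only [mem_setOf_eq] at this
    rw [e] at this
    calc φ z * ‖y‖ ≤ (‖y‖⁻¹ * φ y) * ‖y‖ := by nlinarith
      _ = φ y := by field_simp



lemma exists_xi (h : IsNorm φ) (x : E2) :
    ∃ ξ : E2, φ ξ ≤ 1 ∧ ∀ η : E2, φ η ≤ 1 → ⟪η, x⟫ ≤ ⟪ξ, x⟫ := by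
  obtain ⟨m, hm0, hm⟩ := h.lower
  have hKc : IsCompact {ξ : E2 | φ ξ ≤ 1} := by
    refine (isCompact_closedBall (0:E2) m⁻¹).of_isClosed_subset
      (isClosed_le h.continuous continuous_const) (fun ξ hξ => ?_)
    rw [mem_closedBall_zero_iff]
    have h1 : m * ‖ξ‖ ≤ 1 := le_trans (hm ξ) hξ
    rw [← mul_le_mul_iff_right₀ hm0, mul_inv_cancel₀ hm0.ne']
    exact h1
  obtain ⟨ξ, hmem, hmax⟩ := hKc.exists_isMaxOn (f := fun ξ : E2 => ⟪ξ, x⟫)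
    ⟨0, by simp [h.zero]⟩ ((continuous_id.inner continuous_const).continuousOn)
  exact ⟨ξ, hmem, fun η hη => hmax hη⟩

/-- The unique maximizer of `⟪·, x⟫` over the unit ball of `φ`. -/
def xiF (h : IsNorm φ) (x : E2) : E2 := (exists_xi h x).choose

lemma xi_mem (h : IsNorm φ) (x : E2) : φ (xiF h x) ≤ 1 := (exists_xi h x).choose_spec.1

lemma xi_max (h : IsNorm φ) {x η : E2} (hη : φ η ≤ 1) : ⟪η, x⟫ ≤ ⟪xiF h x, x⟫ :=
  (exists_xi h x).choose_spec.2 η hη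

lemma polar_eq (h : IsNorm φ) (x : E2) : polarN φ x = ⟪xiF h x, x⟫ := by
  apply IsGreatest.csSup_eq
  constructor
  · exact ⟨xiF h x, xi_mem h x, rfl⟩
  · rintro r ⟨ξ, hξ, rfl⟩; exact xi_max h hξ

lemma xi_inner_pos (h : IsNorm φ) {x : E2} (hx : x ≠ 0) : 0 < ⟪xiF h x, x⟫ := by
  obtain ⟨M, hM0, hM⟩ := h.upper
  have hx' : (0:ℝ) < ‖x‖ := norm_pos_iff.2 hx
  have hφ : φ ((M * ‖x‖)⁻¹ • x) ≤ 1 := by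
    rw [h.smul, abs_of_pos (by positivity)]
    have := hM x
    rw [inv_mul_le_iff₀ (by positivity)]
    simpa using this
  have hin : ⟪(M * ‖x‖)⁻¹ • x, x⟫ = (M * ‖x‖)⁻¹ * ‖x‖^2 := by
    rw [real_inner_smul_left, real_inner_self_eq_norm_sq]
  have hmax1 := xi_max h (x := x) hφ
  rw [hin] at hmax1
  have hp : (0:ℝ) < (M * ‖x‖)⁻¹ * ‖x‖^2 := by positivity
  linarith

lemma inner_le_phi_mul (h : IsNorm φ) (y x : E2) : ⟪y, x⟫ ≤ φ y * ⟪xiF h x, x⟫ := by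
  rcases eq_or_ne (φ y) 0 with h0 | h0
  · have hy : y = 0 := (h.eq_zero y).1 h0
    rw [hy, h.zero, inner_zero_left]
    simp
  · have hpos : 0 < φ y := lt_of_le_of_ne (h.nneg y) (Ne.symm h0)
    have hφ : φ ((φ y)⁻¹ • y) ≤ 1 := by
      rw [h.smul, abs_of_pos (inv_pos.2 hpos), inv_mul_cancel₀ h0]
    have := xi_max h (x := x) hφ
    rw [real_inner_smul_left] at this
    calc ⟪y, x⟫ = φ y * ((φ y)⁻¹ * ⟪y, x⟫) := by field_simp
      _ ≤ φ y * ⟪xiF h x, x⟫ := by nlinarith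

lemma xi_boundary (h : IsNorm φ) {x : E2} (hx : x ≠ 0) : φ (xiF h x) = 1 := by
  by_contra hne
  have hlt : φ (xiF h x) < 1 := lt_of_le_of_ne (xi_mem h x) hne
  have hpos := xi_inner_pos h hx
  have := inner_le_phi_mul h (xiF h x) x
  nlinarith



lemma hess_eq (f : E2 → ℝ) (p v : E2) :
    hess f p v v = fderiv ℝ (fderiv ℝ f) p v v := by
  rw [hess, iteratedFDeriv_two_apply]
  simp

lemma line_smooth {f : E2 → ℝ} (hf : ContDiffOn ℝ 2 f {(0:E2)}ᶜ) {ξ w : E2}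
    (hline : ∀ t : ℝ, ξ + t • w ≠ 0) :
    (∀ t : ℝ, HasDerivAt (fun s => f (ξ + s • w)) (fderiv ℝ f (ξ + t • w) w) t) ∧
    (∀ t : ℝ, HasDerivAt (fun s => fderiv ℝ f (ξ + s • w) w)
      (fderiv ℝ (fderiv ℝ f) (ξ + t • w) w w) t) := by
  have hL : ∀ t : ℝ, HasDerivAt (fun s : ℝ => ξ + s • w) w t := fun t => by
    simpa using ((hasDerivAt_id t).smul_const w).const_add ξ
  have hopen : IsOpen {(0:E2)}ᶜ := isOpen_compl_singleton
  have hca : ∀ t : ℝ, ContDiffAt ℝ 2 f (ξ + t • w) := fun t =>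
    hf.contDiffAt (hopen.mem_nhds (hline t))
  constructor
  · intro t
    have hd : DifferentiableAt ℝ f (ξ + t • w) :=
      (hca t).differentiableAt (by norm_num)
    exact hd.hasFDerivAt.comp_hasDerivAt t (hL t)
  · intro t
    have h2 : ContDiffAt ℝ 1 (fderiv ℝ f) (ξ + t • w) :=
      (hca t).fderiv_right (by norm_num)
    have hd : DifferentiableAt ℝ (fderiv ℝ f) (ξ + t • w) :=
      h2.differentiableAt (by norm_num)
    have hD : HasDerivAt (fun s => fderiv ℝ f (ξ + s • w))
        (fderiv ℝ (fderiv ℝ f) (ξ + t • w) w) t :=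
      hd.hasFDerivAt.comp_hasDerivAt t (hL t)
    exact (ContinuousLinearMap.apply ℝ ℝ w).hasFDerivAt.comp_hasDerivAt t hD


lemma midpoint_strong (h : IsNorm φ) (hsm : SmoothAnisotropy φ) (hell : EllipticAnisotropy φ) :
    ∃ c1, 0 < c1 ∧ ∀ ξ η : E2,
      φ ((1/2 : ℝ) • (ξ + η)) ^ 2 ≤ (φ ξ ^ 2 + φ η ^ 2)/2 - c1 * ‖η - ξ‖ ^ 2 := by
  obtain ⟨m, hm0, hm⟩ := h.lower
  obtain ⟨C, hC0, hC⟩ := hell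
  refine ⟨min (C/8) (m^2/4), by positivity, fun ξ η => ?_⟩
  set c1 := min (C/8) (m^2/4) with hc1
  set w : E2 := η - ξ with hw
  have hη : η = ξ + w := by rw [hw]; abel
  have hmid : (1/2 : ℝ) • (ξ + η) = ξ + (1/2 : ℝ) • w := by
    rw [hη]; module
  have ha : m^2 * ‖w‖^2 ≤ φ w ^ 2 := by
    have := hm w
    nlinarith [mul_le_mul this this (by positivity) (h.nneg w)]
  by_cases hzero : ∃ t : ℝ, ξ + t • w = 0
  · obtain ⟨t0, ht0⟩ := hzero
    have hξ : ξ = (-t0) • w := by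
      have e : ξ = -(t0 • w) := eq_neg_of_add_eq_zero_left ht0
      rw [e]; module
    have hsq : ∀ c : ℝ, φ (c • w) ^ 2 = c^2 * φ w ^ 2 := fun c => by
      rw [h.smul]; rw [mul_pow, sq_abs]
    have e1 : φ ξ ^ 2 = t0^2 * φ w ^2 := by rw [hξ, hsq]; ring_nf
    have e2 : φ η ^ 2 = (1 - t0)^2 * φ w ^2 := by
      have : η = (1 - t0) • w := by rw [hη, hξ]; module
      rw [this, hsq]
    have e3 : φ ((1/2 : ℝ) • (ξ + η)) ^ 2 = (1/2 - t0)^2 * φ w ^2 := by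
      have : (1/2 : ℝ) • (ξ + η) = (1/2 - t0) • w := by rw [hmid, hξ]; module
      rw [this, hsq]
    rw [e1, e2, e3]
    have hc1le : c1 ≤ m^2/4 := min_le_right _ _
    nlinarith [sq_nonneg (‖w‖), sq_nonneg (φ w)]
  · push_neg at hzero
    have hf : ContDiffOn ℝ 2 (fun q => φ q ^ 2) {(0:E2)}ᶜ := (hsm.pow 2).of_le (WithTop.coe_le_coe.2 le_top)
    obtain ⟨h1, h2⟩ := line_smooth hf hzero
    set f : E2 → ℝ := fun q => φ q ^ 2 with hfdef
    set C' : ℝ := C * ‖w‖^2 / 2 with hC'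
    set g : ℝ → ℝ := fun s => f (ξ + s • w) with hg
    set q : ℝ → ℝ := fun s => g s - C' * s^2 with hq
    have hlin : ∀ t : ℝ, HasDerivAt (fun s : ℝ => C' * s^2) (C' * (2*t)) t := fun t => by
      simpa [mul_assoc] using (hasDerivAt_pow 2 t).const_mul C'
    have hq1 : ∀ t, HasDerivAt q (fderiv ℝ f (ξ + t • w) w - C' * (2*t)) t :=
      fun t => (h1 t).sub (hlin t)
    have hqd : Differentiable ℝ q := fun t => (hq1 t).differentiableAt
    have hderivq : deriv q = fun t => fderiv ℝ f (ξ + t • w) w - C' * (2*t) :=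
      funext fun t => (hq1 t).deriv
    have hlin2 : ∀ t : ℝ, HasDerivAt (fun s : ℝ => C' * (2*s)) (C' * 2) t := fun t => by
      have h' := (hasDerivAt_id t).const_mul (C' * 2)
      simp only [mul_one] at h'
      exact h'.congr_of_eventuallyEq (Eventually.of_forall fun y => by simp only [id_eq]; ring)
    have hDq : ∀ t, HasDerivAt (deriv q)
        (fderiv ℝ (fderiv ℝ f) (ξ + t • w) w w - C' * 2) t := by
      rw [hderivq]
      exact fun t => (h2 t).sub (hlin2 t)
    have hqd2 : Differentiable ℝ (deriv q) := fun t => (hDq t).differentiableAt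
    have h2nonneg : ∀ t : ℝ, 0 ≤ deriv^[2] q t := by
      intro t
      have e : deriv^[2] q t = deriv (deriv q) t := by
        rw [Function.iterate_succ, Function.iterate_one]; rfl
      rw [e, (hDq t).deriv]
      have hhess := hC (ξ + t • w) (hzero t) w
      rw [hess_eq] at hhess
      have : C' * 2 = C * ‖w‖^2 := by rw [hC']; ring
      linarith
    have hconv := convexOn_univ_of_deriv2_nonneg hqd hqd2 h2nonneg
    have hmidq := hconv.2 (mem_univ (0:ℝ)) (mem_univ (1:ℝ))
      (by norm_num : (0:ℝ) ≤ 1/2) (by norm_num : (0:ℝ) ≤ 1/2) (by norm_num)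
    simp only [smul_eq_mul] at hmidq
    norm_num at hmidq
    have eq0 : q 0 = f ξ := by simp [hq, hg]
    have eq1 : q 1 = f η - C' := by simp [hq, hg, hη]
    have eqh : q (1/2) = f ((1/2 : ℝ) • (ξ + η)) - C'/4 := by
      rw [hq]; simp only [hg]
      rw [← hmid]; norm_num; ring
    rw [eq0, eq1, eqh] at hmidq
    have hc1le : c1 ≤ C/8 := min_le_left _ _
    have : f ((1/2 : ℝ) • (ξ + η)) ≤ (f ξ + f η)/2 - C'/4 := by linarith
    have hC'4 : c1 * ‖w‖^2 ≤ C'/4 := by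
      rw [hC']
      have : c1 * ‖w‖^2 ≤ (C/8) * ‖w‖^2 := by nlinarith [sq_nonneg ‖w‖]
      linarith [this]
    simp only [hfdef] at this
    linarith


lemma xi_close (h : IsNorm φ) {c1 : ℝ} (hc1 : 0 < c1)
    (hmidpt : ∀ ξ η : E2,
      φ ((1/2 : ℝ) • (ξ + η)) ^ 2 ≤ (φ ξ ^ 2 + φ η ^ 2)/2 - c1 * ‖η - ξ‖ ^ 2)
    {x ξ : E2} {δ : ℝ} (hx : x ≠ 0) (hξ : φ ξ ≤ 1) (hδ0 : 0 ≤ δ)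
    (hδ : ⟪xiF h x, x⟫ - δ ≤ ⟪ξ, x⟫) :
    c1 * ⟪xiF h x, x⟫ * ‖ξ - xiF h x‖^2 ≤ δ := by
  set hx0 : ℝ := ⟪xiF h x, x⟫ with hhx0
  have hpos : 0 < hx0 := xi_inner_pos h hx
  set d2 : ℝ := ‖xiF h x - ξ‖^2 with hd2
  have hd2' : ‖ξ - xiF h x‖^2 = d2 := by rw [hd2, ← norm_neg (xiF h x - ξ), neg_sub]
  set mp : E2 := (1/2 : ℝ) • (ξ + xiF h x) with hmp
  have hfm : φ mp ^ 2 ≤ 1 - c1 * d2 := by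
    have := hmidpt ξ (xiF h x)
    have h1 : φ ξ ^ 2 ≤ 1 := by nlinarith [h.nneg ξ]
    have h2 : φ (xiF h x) ^ 2 ≤ 1 := by nlinarith [h.nneg (xiF h x), xi_mem h x]
    nlinarith
  have hfm0 : 0 ≤ φ mp ^ 2 := sq_nonneg _
  have hcd : c1 * d2 ≤ 1 := by nlinarith
  have hφm : φ mp ≤ 1 - c1 * d2 / 2 := by
    have hb : (0:ℝ) ≤ 1 - c1 * d2 / 2 := by nlinarith [hc1.le, sq_nonneg (‖xiF h x - ξ‖)]
    have hone : (1:ℝ) - c1 * d2 ≤ (1 - c1 * d2/2)^2 := by nlinarith [sq_nonneg (c1*d2)]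
    calc φ mp = Real.sqrt (φ mp ^ 2) := (Real.sqrt_sq (h.nneg mp)).symm
      _ ≤ Real.sqrt ((1 - c1 * d2/2)^2) := Real.sqrt_le_sqrt (by linarith)
      _ = 1 - c1 * d2/2 := Real.sqrt_sq hb
  have hinm : ⟪mp, x⟫ = (⟪ξ, x⟫ + hx0)/2 := by
    rw [hmp, real_inner_smul_left, inner_add_left]; ring
  have hle := inner_le_phi_mul h mp x
  rw [hinm] at hle
  have : hx0 - δ/2 ≤ (1 - c1 * d2/2) * hx0 := by nlinarith
  rw [hd2']
  nlinarith

lemma xi_unique (h : IsNorm φ) {c1 : ℝ} (hc1 : 0 < c1)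
    (hmidpt : ∀ ξ η : E2,
      φ ((1/2 : ℝ) • (ξ + η)) ^ 2 ≤ (φ ξ ^ 2 + φ η ^ 2)/2 - c1 * ‖η - ξ‖ ^ 2)
    {x ξ : E2} (hx : x ≠ 0) (hξ : φ ξ ≤ 1) (hδ : ⟪xiF h x, x⟫ ≤ ⟪ξ, x⟫) :
    ξ = xiF h x := by
  have := xi_close h hc1 hmidpt hx hξ le_rfl (δ := 0) (by linarith)
  have hpos := xi_inner_pos h hx
  have hd : ‖ξ - xiF h x‖^2 ≤ 0 := by
    by_contra hgt
    push_neg at hgt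
    nlinarith [mul_pos (mul_pos hc1 hpos) hgt]
  have h0 : ‖ξ - xiF h x‖ = 0 := by nlinarith [norm_nonneg (ξ - xiF h x)]
  have := norm_eq_zero.1 h0
  rwa [sub_eq_zero] at this

lemma xi_neg (h : IsNorm φ) {c1 : ℝ} (hc1 : 0 < c1)
    (hmidpt : ∀ ξ η : E2,
      φ ((1/2 : ℝ) • (ξ + η)) ^ 2 ≤ (φ ξ ^ 2 + φ η ^ 2)/2 - c1 * ‖η - ξ‖ ^ 2)
    {x : E2} (hx : x ≠ 0) : xiF h (-x) = - xiF h x := by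
  have hφneg : φ (- xiF h x) ≤ 1 := by
    have : φ (- xiF h x) = φ (xiF h x) := by simpa using h.smul (-1) (xiF h x)
    rw [this]; exact xi_mem h x
  have hmax : ⟪xiF h (-x), -x⟫ ≤ ⟪- xiF h x, -x⟫ := by
    rw [inner_neg_neg]
    have hφ' : φ (- xiF h (-x)) ≤ 1 := by
      have : φ (- xiF h (-x)) = φ (xiF h (-x)) := by simpa using h.smul (-1) (xiF h (-x))
      rw [this]; exact xi_mem h (-x)
    have := xi_max h (x := x) hφ'
    rw [inner_neg_left] at this
    have h2 : - ⟪xiF h x, x⟫ ≤ ⟪xiF h (-x), x⟫ := by linarith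
    rw [inner_neg_right]
    linarith
  exact (xi_unique h hc1 hmidpt (neg_ne_zero.2 hx) hφneg hmax).symm


lemma xi_continuousAt (h : IsNorm φ) {c1 : ℝ} (hc1 : 0 < c1)
    (hmidpt : ∀ ξ η : E2,
      φ ((1/2 : ℝ) • (ξ + η)) ^ 2 ≤ (φ ξ ^ 2 + φ η ^ 2)/2 - c1 * ‖η - ξ‖ ^ 2)
    {x : E2} (hx : x ≠ 0) : ContinuousAt (xiF h) x := by
  obtain ⟨m, hm0, hm⟩ := h.lower
  have hR : ∀ y : E2, ‖xiF h y‖ ≤ m⁻¹ := by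
    intro y
    have h1 : m * ‖xiF h y‖ ≤ 1 := le_trans (hm _) (xi_mem h y)
    rw [← mul_le_mul_iff_right₀ hm0, mul_inv_cancel₀ hm0.ne']
    exact h1
  set hx0 : ℝ := ⟪xiF h x, x⟫ with hhx0
  have hpos : 0 < hx0 := xi_inner_pos h hx
  set A : ℝ := 2 * m⁻¹ / (c1 * hx0) with hA
  have hA0 : 0 < A := by positivity
  have key : ∀ y : E2, ‖xiF h y - xiF h x‖^2 ≤ A * ‖x - y‖ := by
    intro y
    have hdef : hx0 - 2 * m⁻¹ * ‖x - y‖ ≤ ⟪xiF h y, x⟫ := by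
      have e1 : ⟪xiF h y, x⟫ = ⟪xiF h y, y⟫ + ⟪xiF h y, x - y⟫ := by
        rw [← inner_add_right]; norm_num
      have e2 : ⟪xiF h x, y⟫ = hx0 + ⟪xiF h x, y - x⟫ := by
        rw [hhx0, ← inner_add_right]; norm_num
      have b1 : ⟪xiF h x, y⟫ ≤ ⟪xiF h y, y⟫ := xi_max h (xi_mem h x)
      have b2 : |⟪xiF h y, x - y⟫| ≤ m⁻¹ * ‖x - y‖ := by
        calc |⟪xiF h y, x - y⟫| ≤ ‖xiF h y‖ * ‖x - y‖ := abs_real_inner_le_norm _ _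
          _ ≤ m⁻¹ * ‖x - y‖ := by nlinarith [hR y, norm_nonneg (x - y)]
      have b3 : |⟪xiF h x, y - x⟫| ≤ m⁻¹ * ‖x - y‖ := by
        calc |⟪xiF h x, y - x⟫| ≤ ‖xiF h x‖ * ‖y - x‖ := abs_real_inner_le_norm _ _
          _ ≤ m⁻¹ * ‖x - y‖ := by
            rw [norm_sub_rev y x]
            nlinarith [hR x, norm_nonneg (x - y)]
      have hb2 := abs_le.1 b2
      have hb3 := abs_le.1 b3
      linarith [e1, e2 ▸ b1]
    have := xi_close h hc1 hmidpt hx (xi_mem h y) (by positivity) hdef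
    rw [← mul_le_mul_iff_right₀ (show (0:ℝ) < c1 * hx0 by positivity)]
    calc c1 * hx0 * ‖xiF h y - xiF h x‖^2 ≤ 2 * m⁻¹ * ‖x - y‖ := this
      _ = c1 * hx0 * (A * ‖x - y‖) := by rw [hA]; field_simp
  rw [ContinuousAt, tendsto_iff_dist_tendsto_zero]
  have hbound : ∀ y : E2, dist (xiF h y) (xiF h x) ≤ Real.sqrt (A * dist y x) := by
    intro y
    rw [dist_eq_norm, dist_eq_norm]
    calc ‖xiF h y - xiF h x‖ = Real.sqrt (‖xiF h y - xiF h x‖^2) :=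
        (Real.sqrt_sq (norm_nonneg _)).symm
      _ ≤ Real.sqrt (A * ‖y - x‖) := Real.sqrt_le_sqrt
          (by rw [show ‖y - x‖ = ‖x - y‖ from norm_sub_rev y x]; exact key y)
  have hlim : Tendsto (fun y : E2 => Real.sqrt (A * dist y x)) (𝓝 x) (𝓝 0) := by
    have hc : Continuous (fun y : E2 => Real.sqrt (A * dist y x)) :=
      Real.continuous_sqrt.comp (continuous_const.mul (continuous_id.dist continuous_const))
    have := hc.tendsto x
    simpa using this
  exact squeeze_zero (fun y => dist_nonneg) hbound hlim

lemma xi_hasGradient (h : IsNorm φ) {c1 : ℝ} (hc1 : 0 < c1)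
    (hmidpt : ∀ ξ η : E2,
      φ ((1/2 : ℝ) • (ξ + η)) ^ 2 ≤ (φ ξ ^ 2 + φ η ^ 2)/2 - c1 * ‖η - ξ‖ ^ 2)
    {x : E2} (hx : x ≠ 0) : HasGradientAt (polarN φ) (xiF h x) x := by
  rw [hasGradientAt_iff_hasFDerivAt]
  apply HasFDerivAt.of_isLittleO
  rw [Asymptotics.isLittleO_iff]
  intro c hc
  have hcont := (xi_continuousAt h hc1 hmidpt hx).tendsto
  have hev : ∀ᶠ y in 𝓝 x, dist (xiF h y) (xiF h x) < c :=
    Metric.tendsto_nhds.1 hcont c hc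
  filter_upwards [hev] with y hy
  have hxy : ‖xiF h y - xiF h x‖ ≤ c := by
    rw [← dist_eq_norm]; exact hy.le
  have expr_eq : polarN φ y - polarN φ x - (InnerProductSpace.toDual ℝ E2 (xiF h x)) (y - x)
      = ⟪xiF h y, y⟫ - ⟪xiF h x, y⟫ := by
    rw [polar_eq h, polar_eq h, InnerProductSpace.toDual_apply_apply, inner_sub_right]
    ring
  have hnn : 0 ≤ ⟪xiF h y, y⟫ - ⟪xiF h x, y⟫ :=
    sub_nonneg.2 (xi_max h (xi_mem h x))
  have hup : ⟪xiF h y, y⟫ - ⟪xiF h x, y⟫ ≤ c * ‖y - x‖ := by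
    have e1 : ⟪xiF h y, y⟫ - ⟪xiF h x, y⟫
        = (⟪xiF h y, x⟫ - ⟪xiF h x, x⟫) + ⟪xiF h y - xiF h x, y - x⟫ := by
      rw [inner_sub_left, inner_sub_right, inner_sub_right]; ring
    have b1 : ⟪xiF h y, x⟫ ≤ ⟪xiF h x, x⟫ := xi_max h (xi_mem h y)
    have b2 : ⟪xiF h y - xiF h x, y - x⟫ ≤ ‖xiF h y - xiF h x‖ * ‖y - x‖ :=
      real_inner_le_norm _ _
    have b3 : ‖xiF h y - xiF h x‖ * ‖y - x‖ ≤ c * ‖y - x‖ := by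
      nlinarith [norm_nonneg (y - x)]
    linarith [e1]
  rw [expr_eq]
  rw [Real.norm_eq_abs, abs_of_nonneg hnn]
  calc ⟪xiF h y, y⟫ - ⟪xiF h x, y⟫ ≤ c * ‖y - x‖ := hup
    _ ≤ c * ‖y - x‖ := le_rfl

lemma xi_gradient_eq (h : IsNorm φ) {c1 : ℝ} (hc1 : 0 < c1)
    (hmidpt : ∀ ξ η : E2,
      φ ((1/2 : ℝ) • (ξ + η)) ^ 2 ≤ (φ ξ ^ 2 + φ η ^ 2)/2 - c1 * ‖η - ξ‖ ^ 2)
    {x : E2} (hx : x ≠ 0) : gradient (polarN φ) x = xiF h x :=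
  (xi_hasGradient h hc1 hmidpt hx).gradient



lemma inner_E2 (a b : E2) : ⟪a, b⟫ = a 0 * b 0 + a 1 * b 1 := by
  rw [PiLp.inner_apply, Fin.sum_univ_two]
  simp [RCLike.inner_apply, conj_trivial]
  ring

lemma rotInv_zero (v : E2) : rotInv v 0 = v 1 := rfl
lemma rotInv_one (v : E2) : rotInv v 1 = -(v 0) := rfl

lemma norm_sq_E2 {a : E2} (ha : ‖a‖ = 1) : a 0 ^ 2 + a 1 ^ 2 = 1 := by
  have h1 : Real.sqrt (a 0 ^ 2 + a 1 ^ 2) = 1 := by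
    rw [← ha, EuclideanSpace.norm_eq, Fin.sum_univ_two]
    norm_num [Real.norm_eq_abs, sq_abs]
  have h2 : (0:ℝ) ≤ a 0 ^ 2 + a 1 ^ 2 := by positivity
  nlinarith [Real.sq_sqrt h2, h1]

lemma inner_rot_identity {a b : E2} (ha : ‖a‖ = 1) (hb : ‖b‖ = 1) :
    ⟪a, b⟫ ^ 2 + ⟪a, rotInv b⟫ ^ 2 = 1 := by
  rw [inner_E2, inner_E2, rotInv_zero, rotInv_one]
  have h1 := norm_sq_E2 ha
  have h2 := norm_sq_E2 hb
  nlinarith [h1, h2]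

lemma parallel_of_inner_sq_one {a b : E2} (ha : ‖a‖ = 1) (hb : ‖b‖ = 1)
    (hin : ⟪a, b⟫ ^ 2 = 1) : a = b ∨ a = -b := by
  have h1 := norm_sq_E2 ha
  have h2 := norm_sq_E2 hb
  rw [inner_E2] at hin
  set s := a 0 * b 0 + a 1 * b 1 with hs
  have hcase : s = 1 ∨ s = -1 := by
    have : (s - 1) * (s + 1) = 0 := by nlinarith
    rcases mul_eq_zero.1 this with h | h
    · left; linarith
    · right; linarith
  rcases hcase with hone | hneg
  · left
    have k0 : (a 0 - b 0)^2 + (a 1 - b 1)^2 = 0 := by nlinarith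
    ext i
    fin_cases i
    · have : (a 0 - b 0)^2 = 0 := by nlinarith [sq_nonneg (a 1 - b 1), sq_nonneg (a 0 - b 0)]
      have := pow_eq_zero_iff (n := 2) (by norm_num) |>.1 this
      simpa [sub_eq_zero] using this
    · have : (a 1 - b 1)^2 = 0 := by nlinarith [sq_nonneg (a 1 - b 1), sq_nonneg (a 0 - b 0)]
      have := pow_eq_zero_iff (n := 2) (by norm_num) |>.1 this
      simpa [sub_eq_zero] using this
  · right
    have k0 : (a 0 + b 0)^2 + (a 1 + b 1)^2 = 0 := by nlinarith
    ext i
    fin_cases i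
    · have : (a 0 + b 0)^2 = 0 := by nlinarith [sq_nonneg (a 1 + b 1), sq_nonneg (a 0 + b 0)]
      have h' := pow_eq_zero_iff (n := 2) (by norm_num) |>.1 this
      have : a 0 = -(b 0) := by linarith
      simpa using this
    · have : (a 1 + b 1)^2 = 0 := by nlinarith [sq_nonneg (a 1 + b 1), sq_nonneg (a 0 + b 0)]
      have h' := pow_eq_zero_iff (n := 2) (by norm_num) |>.1 this
      have : a 1 = -(b 1) := by linarith
      simpa using this


lemma unit_ne_zero {a : E2} (ha : ‖a‖ = 1) : a ≠ 0 := by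
  intro e; rw [e] at ha; simp at ha

lemma no_parallel (h : IsNorm φ) {c1 : ℝ} (hc1 : 0 < c1)
    (hmidpt : ∀ ξ η : E2,
      φ ((1/2 : ℝ) • (ξ + η)) ^ 2 ≤ (φ ξ ^ 2 + φ η ^ 2)/2 - c1 * ‖η - ξ‖ ^ 2)
    {a b c : E2} (ha : ‖a‖ = 1) (hb : ‖b‖ = 1) (hc : ‖c‖ = 1)
    (hsum : xiF h a + xiF h b + xiF h c = 0) (hpar : a = b ∨ a = -b) : False := by
  have ha0 := unit_ne_zero ha
  have hb0 := unit_ne_zero hb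
  have hc0 := unit_ne_zero hc
  have hφc : φ (xiF h c) = 1 := xi_boundary h hc0
  rcases hpar with rfl | rfl
  · -- a = b
    have hxc : xiF h c = (-2 : ℝ) • xiF h a := by
      have e : xiF h c = -(xiF h a + xiF h a) := eq_neg_of_add_eq_zero_right hsum
      rw [e]; module
    rw [hxc, h.smul] at hφc
    rw [xi_boundary h ha0] at hφc
    norm_num at hφc
  · -- a = -b
    have hxa : xiF h (-b) = - xiF h b := xi_neg h hc1 hmidpt hb0
    rw [hxa] at hsum
    have : xiF h c = 0 := by
      have : -xiF h b + xiF h b + xiF h c = xiF h c := by abel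
      rw [← this, hsum]
    rw [this, h.zero] at hφc
    norm_num at hφc



end AuxHerring

/-- `a0`: for unit normals satisfying the anisotropic Herring condition, the
mutual angles are uniformly bounded away from `0` and `π`, with constants depending only on the
polar anisotropy. -/
theorem herring_angles_bounded
    (φ : E2 → ℝ) (hnorm : IsNorm φ) (hsm : SmoothAnisotropy φ) (hell : EllipticAnisotropy φ) :
    ∃ Cb : ℝ, Cb ∈ Ico (0:ℝ) 1 ∧ ∃ a₀ : ℝ, 0 < a₀ ∧
      ∀ ν : Fin 3 → E2, (∀ i, ‖ν i‖ = 1) →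
        (∑ i : Fin 3, gradient (polarN φ) (ν i)) = 0 →
        ∀ i j : Fin 3, i ≠ j → |⟪ν i, ν j⟫| ≤ Cb ∧ a₀ ≤ |⟪ν i, rotInv (ν j)⟫| := by
  obtain ⟨c1, hc1, hmidpt⟩ := midpoint_strong hnorm hsm hell
  set S : Set (Fin 3 → E2) :=
    {ν | (∀ i, ‖ν i‖ = 1) ∧ ∑ i : Fin 3, xiF hnorm (ν i) = 0} with hSdef
  have hmemS : ∀ ν : Fin 3 → E2, (∀ i, ‖ν i‖ = 1) →
      (∑ i : Fin 3, gradient (polarN φ) (ν i)) = 0 → ν ∈ S := by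
    intro ν hν hsum
    refine ⟨hν, ?_⟩
    rw [← hsum]
    exact Finset.sum_congr rfl fun i _ =>
      (xi_gradient_eq hnorm hc1 hmidpt (unit_ne_zero (hν i))).symm
  -- pairwise strict bound on S
  have key : ∀ a b c : E2, ‖a‖ = 1 → ‖b‖ = 1 → ‖c‖ = 1 →
      xiF hnorm a + xiF hnorm b + xiF hnorm c = 0 → |⟪a, b⟫| < 1 := by
    intro a b c ha hb hc hsum
    have hle : |⟪a, b⟫| ≤ 1 := by
      have := abs_real_inner_le_norm a b
      rw [ha, hb] at this; simpa using this
    rcases lt_or_eq_of_le hle with hlt | heq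
    · exact hlt
    · exfalso
      refine no_parallel hnorm hc1 hmidpt ha hb hc hsum
        (parallel_of_inner_sq_one ha hb ?_)
      rw [← sq_abs, heq]
      norm_num
  have hlt : ∀ ν ∈ S, ∀ i j : Fin 3, i ≠ j → |⟪ν i, ν j⟫| < 1 := by
    rintro ν ⟨hν1, hν2⟩ i j hij
    rw [Fin.sum_univ_three] at hν2
    have k01 := key (ν 0) (ν 1) (ν 2) (hν1 0) (hν1 1) (hν1 2) hν2
    have k02 := key (ν 0) (ν 2) (ν 1) (hν1 0) (hν1 2) (hν1 1) (by rw [← hν2]; abel)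
    have k12 := key (ν 1) (ν 2) (ν 0) (hν1 1) (hν1 2) (hν1 0) (by rw [← hν2]; abel)
    have k10 := key (ν 1) (ν 0) (ν 2) (hν1 1) (hν1 0) (hν1 2) (by rw [← hν2]; abel)
    have k20 := key (ν 2) (ν 0) (ν 1) (hν1 2) (hν1 0) (hν1 1) (by rw [← hν2]; abel)
    have k21 := key (ν 2) (ν 1) (ν 0) (hν1 2) (hν1 1) (hν1 0) (by rw [← hν2]; abel)
    fin_cases i <;> fin_cases j <;>
      first
      | exact absurd rfl hij
      | exact k01 | exact k02 | exact k10 | exact k12 | exact k20 | exact k21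
  -- compactness
  have hScomp : IsCompact S := by
    apply (isCompact_closedBall (0 : Fin 3 → E2) 1).of_isClosed_subset
    · apply isClosed_of_closure_subset
      intro ν hν
      rw [mem_closure_iff_seq_limit] at hν
      obtain ⟨u, hu, hul⟩ := hν
      have hnormi : ∀ i, ‖ν i‖ = 1 := by
        intro i
        have h1 : Tendsto (fun n => u n i) atTop (𝓝 (ν i)) :=
          ((continuous_apply i).tendsto ν).comp hul
        have h2 := h1.norm
        have h3 : (fun n => ‖u n i‖) = fun _ => (1:ℝ) := funext fun n => (hu n).1 i
        rw [h3] at h2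
        exact tendsto_nhds_unique h2 tendsto_const_nhds
      refine ⟨hnormi, ?_⟩
      have h4 : Tendsto (fun n => ∑ i : Fin 3, xiF hnorm (u n i)) atTop
          (𝓝 (∑ i : Fin 3, xiF hnorm (ν i))) := by
        apply tendsto_finset_sum
        intro i _
        exact ((xi_continuousAt hnorm hc1 hmidpt (unit_ne_zero (hnormi i))).tendsto).comp
          (((continuous_apply i).tendsto ν).comp hul)
      have h5 : (fun n => ∑ i : Fin 3, xiF hnorm (u n i)) = fun _ => (0 : E2) :=
        funext fun n => (hu n).2
      rw [h5] at h4
      exact tendsto_nhds_unique h4 tendsto_const_nhds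
    · rintro ν ⟨hν1, _⟩
      rw [mem_closedBall_zero_iff]
      exact (pi_norm_le_iff_of_nonneg zero_le_one).2 fun i => le_of_eq (hν1 i)
  -- the max function
  set F : (Fin 3 → E2) → ℝ :=
    fun ν => max (max |⟪ν 0, ν 1⟫| |⟪ν 0, ν 2⟫|) |⟪ν 1, ν 2⟫| with hF
  have hFcont : Continuous F := by
    apply Continuous.max
    apply Continuous.max
    · exact ((continuous_apply 0).inner (continuous_apply 1)).abs
    · exact ((continuous_apply 0).inner (continuous_apply 2)).abs
    · exact ((continuous_apply 1).inner (continuous_apply 2)).abs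
  have hFbound : ∀ ν : Fin 3 → E2, ∀ i j : Fin 3, i ≠ j → |⟪ν i, ν j⟫| ≤ F ν := by
    intro ν i j hij
    have hc01 : |⟪ν 0, ν 1⟫| ≤ F ν := le_max_of_le_left (le_max_left _ _)
    have hc02 : |⟪ν 0, ν 2⟫| ≤ F ν := le_max_of_le_left (le_max_right _ _)
    have hc12 : |⟪ν 1, ν 2⟫| ≤ F ν := le_max_right _ _
    fin_cases i <;> fin_cases j <;>
      first
      | exact absurd rfl hij
      | assumption
      | · rw [real_inner_comm]; assumption
  by_cases hne : S.Nonempty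
  · obtain ⟨ν₀, hν₀S, hmax⟩ := hScomp.exists_isMaxOn hne hFcont.continuousOn
    set Cb : ℝ := F ν₀ with hCb
    have hCb0 : 0 ≤ Cb := le_trans (abs_nonneg _) (le_max_of_le_left (le_max_left _ _))
    have hCb1 : Cb < 1 := by
      rw [hCb, hF]
      apply max_lt
      apply max_lt
      · exact hlt ν₀ hν₀S 0 1 (by decide)
      · exact hlt ν₀ hν₀S 0 2 (by decide)
      · exact hlt ν₀ hν₀S 1 2 (by decide)
    refine ⟨Cb, ⟨hCb0, hCb1⟩, Real.sqrt (1 - Cb^2), Real.sqrt_pos.2 (by nlinarith), ?_⟩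
    intro ν hν hsum i j hij
    have hνS := hmemS ν hν hsum
    have hb1 : |⟪ν i, ν j⟫| ≤ Cb := le_trans (hFbound ν i j hij) (hmax hνS)
    refine ⟨hb1, ?_⟩
    have hid := inner_rot_identity (hν i) (hν j)
    have hsq : ⟪ν i, ν j⟫^2 ≤ Cb^2 := by
      rw [← sq_abs]
      exact pow_le_pow_left₀ (abs_nonneg _) hb1 2
    calc Real.sqrt (1 - Cb^2) ≤ Real.sqrt (⟪ν i, rotInv (ν j)⟫^2) :=
        Real.sqrt_le_sqrt (by nlinarith)
      _ = |⟪ν i, rotInv (ν j)⟫| := Real.sqrt_sq_eq_abs _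
  · refine ⟨0, ⟨le_rfl, one_pos⟩, 1, one_pos, ?_⟩
    intro ν hν hsum i j hij
    exact absurd ⟨ν, hmemS ν hν hsum⟩ hne

end
end

section
/- Let μ ∈ ℝ, L > 0, and let γ:[0,L]→ℝ² be of class H³ with |γ'(x)| = 1 for all x ∈ [0,L]. Then there exist a constant C = C(L, μ, ‖γ‖_{H³}) > 0 and a reparametrization φ:[0,L]→[0,L] with φ(0) = 0, φ(L) = L, such that, setting γ̃ = γ∘φ: (i) |γ̃'(x)| = φ'(x) ≥ 1/2 for all x ∈ [0,L]; (ii) γ̃''(0)·γ̃'(0)/|γ̃'(0)|³ = φ''(0)/φ'(0)² = μ; (iii) ‖γ̃‖_{C^{2,1/2}} ≤ C. -/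
noncomputable section

open Real Set Filter Function Topology MeasureTheory RealInnerProductSpace

section MyHelpers

open scoped Interval

lemma lip_of_deriv {F : Type*} [NormedAddCommGroup F] [NormedSpace ℝ F] [CompleteSpace F]
    {f f' : ℝ → F} (hd : ∀ t, HasDerivAt f (f' t) t) (hc : Continuous f')
    {K : ℝ} (hK : ∀ t, ‖f' t‖ ≤ K) (x y : ℝ) : ‖f x - f y‖ ≤ K * |x - y| := by
  have h1 : ∫ t in y..x, f' t = f x - f y :=
    intervalIntegral.integral_eq_sub_of_hasDerivAt (fun t _ => hd t)
      (hc.intervalIntegrable y x)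
  rw [← h1]
  exact intervalIntegral.norm_integral_le_of_norm_le_const fun t _ => hK t

lemma lipOn_of_deriv {F : Type*} [NormedAddCommGroup F] [NormedSpace ℝ F] [CompleteSpace F]
    {L : ℝ} (hL : 0 ≤ L) {f f' : ℝ → F}
    (hd : ∀ t, HasDerivAt f (f' t) t) (hc : Continuous f')
    {K : ℝ} (hK : ∀ t ∈ Icc (0:ℝ) L, ‖f' t‖ ≤ K)
    {x y : ℝ} (hx : x ∈ Icc (0:ℝ) L) (hy : y ∈ Icc (0:ℝ) L) :
    ‖f x - f y‖ ≤ K * |x - y| := by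
  have hsub : Ι y x ⊆ Icc (0:ℝ) L := by
    refine subset_trans Set.Ioc_subset_Icc_self ?_
    rw [← Set.uIcc_of_le hL]
    exact Set.uIcc_subset_uIcc (by rwa [Set.uIcc_of_le hL]) (by rwa [Set.uIcc_of_le hL])
  have h1 : ∫ t in y..x, f' t = f x - f y :=
    intervalIntegral.integral_eq_sub_of_hasDerivAt (fun t _ => hd t)
      (hc.intervalIntegrable y x)
  rw [← h1]
  exact intervalIntegral.norm_integral_le_of_norm_le_const fun t ht => hK t (hsub ht)

lemma holder_half_integral {L : ℝ} (hL : 0 ≤ L) {g : ℝ → E2}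
    (hg : MemLp g 2 (volume.restrict (Icc (0:ℝ) L)))
    {a b : ℝ} (ha : a ∈ Icc (0:ℝ) L) (hb : b ∈ Icc (0:ℝ) L) :
    ‖∫ t in b..a, g t‖ ≤
      (eLpNorm g 2 (volume.restrict (Icc (0:ℝ) L))).toReal * |a - b| ^ ((1:ℝ)/2) := by
  have hsub : Ι b a ⊆ Icc (0:ℝ) L := by
    refine subset_trans Set.Ioc_subset_Icc_self ?_
    rw [← Set.uIcc_of_le hL]
    exact Set.uIcc_subset_uIcc (by rwa [Set.uIcc_of_le hL]) (by rwa [Set.uIcc_of_le hL])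
  have hmono : volume.restrict (Ι b a) ≤ volume.restrict (Icc (0:ℝ) L) :=
    Measure.restrict_mono hsub le_rfl
  have hmeas : AEStronglyMeasurable g (volume.restrict (Ι b a)) :=
    hg.1.mono_measure hmono
  have step1 : ‖∫ t in b..a, g t‖ ≤ ∫ t in Ι b a, ‖g t‖ :=
    intervalIntegral.norm_integral_le_integral_norm_uIoc
  have step2 : ∫ t in Ι b a, ‖g t‖ = (eLpNorm g 1 (volume.restrict (Ι b a))).toReal := by
    rw [MeasureTheory.integral_norm_eq_lintegral_enorm hmeas,
      MeasureTheory.eLpNorm_one_eq_lintegral_enorm]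
  have hvol : (volume.restrict (Ι b a)) Set.univ = ENNReal.ofReal |a - b| := by
    rw [Measure.restrict_apply_univ, Set.uIoc, Real.volume_Ioc]
    congr 1
    rw [max_sub_min_eq_abs, abs_sub_comm]
  have step3 : eLpNorm g 1 (volume.restrict (Ι b a)) ≤
      eLpNorm g 2 (volume.restrict (Icc (0:ℝ) L)) * ENNReal.ofReal |a - b| ^ ((1:ℝ)/2) := by
    have h1 := MeasureTheory.eLpNorm_le_eLpNorm_mul_rpow_measure_univ
      (p := 1) (q := 2) (μ := volume.restrict (Ι b a)) (by norm_num) hmeas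
    rw [hvol] at h1
    have h2 : (1 / ENNReal.toReal 1 - 1 / ENNReal.toReal 2) = (1:ℝ)/2 := by norm_num
    rw [h2] at h1
    refine h1.trans ?_
    gcongr
  have hfin : eLpNorm g 2 (volume.restrict (Icc (0:ℝ) L)) * ENNReal.ofReal |a - b| ^ ((1:ℝ)/2)
      ≠ ⊤ := by
    apply ENNReal.mul_ne_top hg.2.ne
    exact ENNReal.rpow_ne_top_of_nonneg (by norm_num) ENNReal.ofReal_ne_top
  calc ‖∫ t in b..a, g t‖ ≤ (eLpNorm g 1 (volume.restrict (Ι b a))).toReal := by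
        rw [← step2]; exact step1
    _ ≤ (eLpNorm g 2 (volume.restrict (Icc (0:ℝ) L)) *
          ENNReal.ofReal |a - b| ^ ((1:ℝ)/2)).toReal := ENNReal.toReal_mono hfin step3
    _ = (eLpNorm g 2 (volume.restrict (Icc (0:ℝ) L))).toReal * |a - b| ^ ((1:ℝ)/2) := by
        rw [ENNReal.toReal_mul, ← ENNReal.toReal_rpow, ENNReal.toReal_ofReal (abs_nonneg _)]

def pphi (m ω : ℝ) : ℝ → ℝ := fun x => x + m / ω ^ 2 * (1 - Real.cos (ω * x))
def pphid (m ω : ℝ) : ℝ → ℝ := fun x => 1 + m / ω * Real.sin (ω * x)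

lemma pphi_hasDerivAt {m ω : ℝ} (hω : ω ≠ 0) (x : ℝ) :
    HasDerivAt (pphi m ω) (pphid m ω x) x := by
  have h1 : HasDerivAt (fun x : ℝ => ω * x) ω x := by
    simpa using (hasDerivAt_id x).const_mul ω
  have h2 : HasDerivAt (fun x : ℝ => Real.cos (ω * x)) (-Real.sin (ω * x) * ω) x :=
    (Real.hasDerivAt_cos (ω * x)).comp x h1
  have h3 := (hasDerivAt_id x).add (((h2.const_sub 1)).const_mul (m / ω ^ 2))
  have e : pphid m ω x = 1 + m / ω ^ 2 * -(-Real.sin (ω * x) * ω) := by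
    unfold pphid
    field_simp
  rw [e]
  exact h3

lemma pphid_hasDerivAt {m ω : ℝ} (hω : ω ≠ 0) (x : ℝ) :
    HasDerivAt (pphid m ω) (m * Real.cos (ω * x)) x := by
  have h1 : HasDerivAt (fun x : ℝ => ω * x) ω x := by
    simpa using (hasDerivAt_id x).const_mul ω
  have h2 : HasDerivAt (fun x : ℝ => Real.sin (ω * x)) (Real.cos (ω * x) * ω) x :=
    (Real.hasDerivAt_sin (ω * x)).comp x h1
  have h3 := (h2.const_mul (m / ω)).const_add 1
  have e : m * Real.cos (ω * x) = m / ω * (Real.cos (ω * x) * ω) := by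
    field_simp
  rw [e]
  exact h3

lemma pphi_contDiff (m ω : ℝ) : ContDiff ℝ (⊤ : ℕ∞) (pphi m ω) := by
  unfold pphi
  exact contDiff_id.add (contDiff_const.mul (contDiff_const.sub
    (Real.contDiff_cos.comp (contDiff_const.mul contDiff_id))))

lemma pphid_continuous (m ω : ℝ) : Continuous (pphid m ω) := by
  unfold pphid
  continuity

lemma abs_sin_le_one' (x : ℝ) : |Real.sin x| ≤ 1 :=
  abs_le.mpr ⟨Real.neg_one_le_sin x, Real.sin_le_one x⟩

lemma abs_cos_le_one' (x : ℝ) : |Real.cos x| ≤ 1 :=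
  abs_le.mpr ⟨Real.neg_one_le_cos x, Real.cos_le_one x⟩

lemma lip_cos (u v : ℝ) : |Real.cos u - Real.cos v| ≤ |u - v| := by
  have := lip_of_deriv (f := Real.cos) (f' := fun t => -Real.sin t)
    (fun t => Real.hasDerivAt_cos t) Real.continuous_sin.neg
    (K := 1) (fun t => by simpa using abs_sin_le_one' t) u v
  simpa using this

lemma lip_sin (u v : ℝ) : |Real.sin u - Real.sin v| ≤ |u - v| := by
  have := lip_of_deriv (f := Real.sin) (f' := fun t => Real.cos t)
    (fun t => Real.hasDerivAt_sin t) Real.continuous_cos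
    (K := 1) (fun t => by simpa using abs_cos_le_one' t) u v
  simpa using this

end MyHelpers

set_option maxHeartbeats 1000000 in
/-- Lemma A.8 / `lempara`: an `H³` unit-speed curve can be reparametrized so
as to prescribe the tangential part of the second derivative at the initial point, keeping
uniform `C^{2,1/2}` bounds. -/


theorem reparametrization_lemma
    (μ L : ℝ) (hL : 0 < L) (γ : ℝ → E2)
    (hγ : ContDiff ℝ 2 γ)
    -- γ ∈ H³: the second derivative is an integral of an L² function
    (g : ℝ → E2) (hg : MemLp g 2 (volume.restrict (Icc (0:ℝ) L)))
    (hγ3 : ∀ x ∈ Icc (0:ℝ) L,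
      deriv (deriv γ) x = deriv (deriv γ) 0 + ∫ s in (0:ℝ)..x, g s)
    (hunit : ∀ x ∈ Icc (0:ℝ) L, ‖deriv γ x‖ = 1) :
    ∃ C : ℝ, 0 < C ∧ ∃ φ : ℝ → ℝ, ContDiff ℝ (⊤ : ℕ∞) φ ∧ φ 0 = 0 ∧ φ L = L ∧
      MapsTo φ (Icc (0:ℝ) L) (Icc (0:ℝ) L) ∧
      (∀ x ∈ Icc (0:ℝ) L, ‖deriv (γ ∘ φ) x‖ = deriv φ x ∧ (1:ℝ)/2 ≤ deriv φ x) ∧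
      ⟪deriv (deriv (γ ∘ φ)) 0, deriv (γ ∘ φ) 0⟫ / ‖deriv (γ ∘ φ) 0‖ ^ 3 = μ ∧
      (∀ x ∈ Icc (0:ℝ) L,
        ‖(γ ∘ φ) x‖ + ‖deriv (γ ∘ φ) x‖ + ‖deriv (deriv (γ ∘ φ)) x‖ ≤ C) ∧
      (∀ x ∈ Icc (0:ℝ) L, ∀ y ∈ Icc (0:ℝ) L,
        ‖deriv (deriv (γ ∘ φ)) x - deriv (deriv (γ ∘ φ)) y‖ ≤ C * |x - y| ^ ((1:ℝ)/2)) := by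
  have h0L : (0:ℝ) ∈ Icc (0:ℝ) L := ⟨le_refl 0, hL.le⟩
  have hπ := Real.pi_pos
  obtain ⟨c, hcdef⟩ : ∃ c : ℝ, c = ⟪deriv (deriv γ) 0, deriv γ 0⟫ := ⟨_, rfl⟩
  obtain ⟨m, hmdef⟩ : ∃ m : ℝ, m = μ - c := ⟨_, rfl⟩
  obtain ⟨n, hndef⟩ : ∃ n : ℕ, n = ⌈|m| * L / π⌉₊ + 1 := ⟨_, rfl⟩
  have hn1 : (1:ℝ) ≤ (n:ℝ) := by
    rw [hndef]; exact_mod_cast Nat.succ_le_succ (Nat.zero_le _)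
  obtain ⟨ω, hωdef⟩ : ∃ ω : ℝ, ω = 2 * π * n / L := ⟨_, rfl⟩
  have hωpos : 0 < ω := by
    rw [hωdef]
    apply div_pos _ hL
    nlinarith
  have h2m : 2 * |m| ≤ ω := by
    have h1 : |m| * L / π ≤ (n:ℝ) := by
      rw [hndef]
      exact le_trans (Nat.le_ceil _) (by exact_mod_cast Nat.le_succ _)
    have h2 : |m| * L ≤ π * n := by
      rw [div_le_iff₀ hπ] at h1; linarith
    rw [hωdef, le_div_iff₀ hL]
    linarith
  -- basic bounds on pphid
  have hsinb : ∀ x : ℝ, |m / ω * Real.sin (ω * x)| ≤ 1/2 := by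
    intro x
    rw [abs_mul, abs_div, abs_of_pos hωpos]
    calc |m| / ω * |Real.sin (ω * x)| ≤ |m| / ω * 1 := by
          gcongr
          exact abs_sin_le_one' _
      _ = |m| / ω := mul_one _
      _ ≤ 1/2 := by rw [div_le_iff₀ hωpos]; linarith
  have hφd_lb : ∀ x : ℝ, (1:ℝ)/2 ≤ pphid m ω x := by
    intro x
    have := (abs_le.mp (hsinb x)).1
    unfold pphid; linarith
  have hφd_ub : ∀ x : ℝ, pphid m ω x ≤ 3/2 := by
    intro x
    have := (abs_le.mp (hsinb x)).2
    unfold pphid; linarith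
  have hφd_pos : ∀ x : ℝ, 0 < pphid m ω x := fun x => lt_of_lt_of_le (by norm_num) (hφd_lb x)
  have hφ' : ∀ x, HasDerivAt (pphi m ω) (pphid m ω x) x := pphi_hasDerivAt hωpos.ne'
  have hφd : deriv (pphi m ω) = pphid m ω := funext fun x => (hφ' x).deriv
  have hφc : Continuous (pphi m ω) := (pphi_contDiff m ω).continuous
  -- endpoints
  have hφ0 : pphi m ω 0 = 0 := by simp [pphi]
  have hφL : pphi m ω L = L := by
    have hcl : Real.cos (ω * L) = 1 := by
      have he : ω * L = (n:ℝ) * (2 * π) := by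
        rw [hωdef]; field_simp
      rw [he, Real.cos_nat_mul_two_pi]
    simp [pphi, hcl]
  have hmono : StrictMono (pphi m ω) :=
    strictMono_of_deriv_pos (fun x => by rw [hφd]; exact hφd_pos x)
  have hmaps : MapsTo (pphi m ω) (Icc (0:ℝ) L) (Icc (0:ℝ) L) := by
    intro x hx
    constructor
    · rw [← hφ0]; exact hmono.monotone hx.1
    · rw [← hφL]; exact hmono.monotone hx.2
  -- regularity of γ
  have hγ' : ContDiff ℝ 1 (deriv γ) := by
    have h2 : ContDiff ℝ (1 + 1) γ := by
      have : ((2:ℕ) : WithTop ℕ∞) = 1 + 1 := by norm_num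
      exact this ▸ hγ
    exact (contDiff_succ_iff_deriv.mp h2).2.2
  have hγd : Differentiable ℝ γ := hγ.differentiable (by norm_num)
  have hτd : Differentiable ℝ (deriv γ) := hγ'.differentiable one_ne_zero
  have hτc : Continuous (deriv γ) := hγ'.continuous
  have hνc : Continuous (deriv (deriv γ)) := hγ'.continuous_deriv le_rfl
  -- first derivative of γ ∘ φ
  have hgφ' : ∀ x, HasDerivAt (γ ∘ pphi m ω) (pphid m ω x • deriv γ (pphi m ω x)) x :=
    fun x => ((hγd (pphi m ω x)).hasDerivAt).scomp x (hφ' x)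
  have hD1 : deriv (γ ∘ pphi m ω) = fun x => pphid m ω x • deriv γ (pphi m ω x) :=
    funext fun x => (hgφ' x).deriv
  -- second derivative of γ ∘ φ
  have hτφ' : ∀ x, HasDerivAt (fun x => deriv γ (pphi m ω x))
      (pphid m ω x • deriv (deriv γ) (pphi m ω x)) x :=
    fun x => ((hτd (pphi m ω x)).hasDerivAt).scomp x (hφ' x)
  have hgφ'' : ∀ x, HasDerivAt (deriv (γ ∘ pphi m ω))
      (pphid m ω x • (pphid m ω x • deriv (deriv γ) (pphi m ω x)) +
        (m * Real.cos (ω * x)) • deriv γ (pphi m ω x)) x := by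
    intro x
    rw [hD1]
    exact (pphid_hasDerivAt hωpos.ne' x).smul (hτφ' x)
  have hD2 : deriv (deriv (γ ∘ pphi m ω)) = fun x =>
      pphid m ω x • (pphid m ω x • deriv (deriv γ) (pphi m ω x)) +
        (m * Real.cos (ω * x)) • deriv γ (pphi m ω x) :=
    funext fun x => (hgφ'' x).deriv
  -- sup bounds via compactness
  have hFbc : Continuous (fun x => ‖(γ ∘ pphi m ω) x‖ + ‖deriv (γ ∘ pphi m ω) x‖ +
      ‖deriv (deriv (γ ∘ pphi m ω)) x‖) := by
    rw [hD2, hD1]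
    have c1 : Continuous (γ ∘ pphi m ω) := hγ.continuous.comp hφc
    have c2 : Continuous (fun x => pphid m ω x • deriv γ (pphi m ω x)) :=
      (pphid_continuous m ω).smul (hτc.comp hφc)
    have c3 : Continuous (fun x => pphid m ω x •
        (pphid m ω x • deriv (deriv γ) (pphi m ω x)) +
        (m * Real.cos (ω * x)) • deriv γ (pphi m ω x)) := by
      apply Continuous.add
      · exact (pphid_continuous m ω).smul ((pphid_continuous m ω).smul (hνc.comp hφc))
      · exact (continuous_const.mul (Real.continuous_cos.comp (continuous_const.mul
          continuous_id))).smul (hτc.comp hφc)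
    exact (c1.norm.add c2.norm).add c3.norm
  obtain ⟨x₀, hx₀, hC1⟩ := isCompact_Icc.exists_isMaxOn ⟨0, h0L⟩ hFbc.continuousOn
  obtain ⟨C1, hC1def⟩ : ∃ C1 : ℝ, C1 = ‖(γ ∘ pphi m ω) x₀‖ + ‖deriv (γ ∘ pphi m ω) x₀‖ +
    ‖deriv (deriv (γ ∘ pphi m ω)) x₀‖ := ⟨_, rfl⟩
  have hC1nn : 0 ≤ C1 := by rw [hC1def]; positivity
  -- bound for the second derivative of γ on the interval
  obtain ⟨xν, hxν, hMν⟩ := isCompact_Icc.exists_isMaxOn ⟨0, h0L⟩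
    (hνc.norm.continuousOn (s := Icc (0:ℝ) L))
  obtain ⟨Mν, hMνdef⟩ : ∃ Mν : ℝ, Mν = ‖deriv (deriv γ) xν‖ := ⟨_, rfl⟩
  have hMν' : ∀ t ∈ Icc (0:ℝ) L, ‖deriv (deriv γ) t‖ ≤ Mν := by
    intro t ht; rw [hMνdef]; exact hMν ht
  have hMνnn : 0 ≤ Mν := hMνdef ▸ norm_nonneg _
  obtain ⟨G, hGdef⟩ : ∃ G : ℝ, G = (eLpNorm g 2 (volume.restrict (Icc (0:ℝ) L))).toReal :=
    ⟨_, rfl⟩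
  have hGnn : 0 ≤ G := hGdef ▸ ENNReal.toReal_nonneg
  obtain ⟨C2, hC2def⟩ : ∃ C2 : ℝ, C2 = |m| * ω * L ^ ((1:ℝ)/2) + (3/2) * |m| * Mν * L ^ ((1:ℝ)/2) +
      3 * |m| * Mν * L ^ ((1:ℝ)/2) + (9/4) * ((3/2) ^ ((1:ℝ)/2)) * G := ⟨_, rfl⟩
  have hC2nn : 0 ≤ C2 := by
    have h1 : (0:ℝ) ≤ L ^ ((1:ℝ)/2) := Real.rpow_nonneg hL.le _
    have h2 : (0:ℝ) ≤ ((3:ℝ)/2) ^ ((1:ℝ)/2) := Real.rpow_nonneg (by norm_num) _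
    rw [hC2def]
    positivity
  obtain ⟨C, hCdef⟩ : ∃ C : ℝ, C = max C1 C2 + 1 := ⟨_, rfl⟩
  have hCpos : 0 < C := by
    have := le_max_left C1 C2
    rw [hCdef]; nlinarith
  -- integrability of g
  haveI : IsFiniteMeasure (volume.restrict (Icc (0:ℝ) L)) := by
    constructor
    rw [Measure.restrict_apply_univ, Real.volume_Icc]
    exact ENNReal.ofReal_lt_top
  have hgInt : IntegrableOn g (Icc (0:ℝ) L) volume := hg.integrable (by norm_num)
  have hgIntI : ∀ a ∈ Icc (0:ℝ) L, IntervalIntegrable g volume 0 a := by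
    intro a ha
    apply MeasureTheory.IntegrableOn.intervalIntegrable
    apply hgInt.mono_set
    rw [Set.uIcc_of_le ha.1]
    exact Set.Icc_subset_Icc le_rfl ha.2
  have hνdiff : ∀ a ∈ Icc (0:ℝ) L, ∀ b ∈ Icc (0:ℝ) L,
      deriv (deriv γ) a - deriv (deriv γ) b = ∫ t in b..a, g t := by
    intro a ha b hb
    rw [hγ3 a ha, hγ3 b hb]
    have := intervalIntegral.integral_interval_sub_left (hgIntI a ha) (hgIntI b hb)
    rw [← this]
    abel
  have hνhold : ∀ a ∈ Icc (0:ℝ) L, ∀ b ∈ Icc (0:ℝ) L,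
      ‖deriv (deriv γ) a - deriv (deriv γ) b‖ ≤ G * |a - b| ^ ((1:ℝ)/2) := by
    intro a ha b hb
    rw [hνdiff a ha b hb, hGdef]
    exact holder_half_integral hL.le hg ha hb
  have hτlip : ∀ a ∈ Icc (0:ℝ) L, ∀ b ∈ Icc (0:ℝ) L,
      ‖deriv γ a - deriv γ b‖ ≤ Mν * |a - b| := by
    intro a ha b hb
    exact lipOn_of_deriv hL.le (fun t => (hτd t).hasDerivAt) hνc
      hMν' ha hb
  have hφlip : ∀ x y : ℝ, |pphi m ω x - pphi m ω y| ≤ 3/2 * |x - y| := by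
    intro x y
    have := lip_of_deriv hφ' (pphid_continuous m ω) (K := 3/2)
      (fun t => by rw [Real.norm_eq_abs, abs_of_pos (hφd_pos t)]; exact hφd_ub t) x y
    simpa using this
  -- conclude
  refine ⟨C, hCpos, pphi m ω, pphi_contDiff m ω, hφ0, hφL, hmaps, ?_, ?_, ?_, ?_⟩
  · -- (i)
    intro x hx
    constructor
    · rw [hD1, hφd]
      simp only
      rw [norm_smul, Real.norm_eq_abs, abs_of_pos (hφd_pos x), hunit _ (hmaps hx), mul_one]
    · rw [hφd]; exact hφd_lb x
  · -- (ii)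
    have ed0 : pphid m ω 0 = 1 := by simp [pphid]
    have h1 : ‖deriv γ 0‖ = 1 := hunit 0 h0L
    rw [hD2, hD1]
    simp only [hφ0, ed0, mul_zero, Real.cos_zero, mul_one, one_smul]
    rw [inner_add_left, real_inner_smul_left, real_inner_self_eq_norm_mul_norm, h1, ← hcdef,
      hmdef]
    norm_num
  · -- (iii) sup bound
    intro x hx
    have h3 : ‖(γ ∘ pphi m ω) x‖ + ‖deriv (γ ∘ pphi m ω) x‖ +
        ‖deriv (deriv (γ ∘ pphi m ω)) x‖ ≤ C1 := by rw [hC1def]; exact hC1 hx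
    have h2 : C1 ≤ C := by rw [hCdef]; have := le_max_left C1 C2; linarith
    linarith
  · -- (iv) Hölder bound
    intro x hx y hy
    have hLhalf : (0:ℝ) ≤ L ^ ((1:ℝ)/2) := Real.rpow_nonneg hL.le _
    have hxyL : |x - y| ≤ L := by
      rw [abs_sub_le_iff]
      constructor <;> [linarith [hx.2, hy.1]; linarith [hy.2, hx.1]]
    have hsq : |x - y| ≤ L ^ ((1:ℝ)/2) * |x - y| ^ ((1:ℝ)/2) := by
      have e1 : |x - y| = |x - y| ^ ((1:ℝ)/2) * |x - y| ^ ((1:ℝ)/2) := by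
        rw [← Real.rpow_add' (abs_nonneg _) (by norm_num : (1:ℝ)/2 + 1/2 ≠ 0)]
        norm_num
      have h2 : |x - y| ^ ((1:ℝ)/2) ≤ L ^ ((1:ℝ)/2) :=
        Real.rpow_le_rpow (abs_nonneg _) hxyL (by norm_num)
      calc |x - y| = |x - y| ^ ((1:ℝ)/2) * |x - y| ^ ((1:ℝ)/2) := e1
        _ ≤ L ^ ((1:ℝ)/2) * |x - y| ^ ((1:ℝ)/2) :=
            mul_le_mul_of_nonneg_right h2 (Real.rpow_nonneg (abs_nonneg _) _)
    obtain ⟨r, hrdef⟩ : ∃ r : ℝ, r = |x - y| ^ ((1:ℝ)/2) := ⟨_, rfl⟩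
    have hr0 : 0 ≤ r := hrdef ▸ Real.rpow_nonneg (abs_nonneg _) _
    rw [← hrdef] at hsq
    obtain ⟨A, hAdef⟩ : ∃ A : ℝ, A = pphi m ω x := ⟨_, rfl⟩
    obtain ⟨B, hBdef⟩ : ∃ B : ℝ, B = pphi m ω y := ⟨_, rfl⟩
    have hA : A ∈ Icc (0:ℝ) L := hAdef ▸ hmaps hx
    have hB : B ∈ Icc (0:ℝ) L := hBdef ▸ hmaps hy
    have hab : |A - B| ≤ 3/2 * |x - y| := by rw [hAdef, hBdef]; exact hφlip x y
    obtain ⟨p, hpdef⟩ : ∃ p : ℝ, p = pphid m ω x := ⟨_, rfl⟩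
    obtain ⟨q, hqdef⟩ : ∃ q : ℝ, q = pphid m ω y := ⟨_, rfl⟩
    have hpq : |p - q| ≤ |m| * |x - y| := by
      have e1 : p - q = m / ω * (Real.sin (ω * x) - Real.sin (ω * y)) := by
        rw [hpdef, hqdef]; unfold pphid; ring
      rw [e1, abs_mul, abs_div, abs_of_pos hωpos]
      calc |m| / ω * |Real.sin (ω * x) - Real.sin (ω * y)| ≤ |m| / ω * |ω * x - ω * y| :=
            mul_le_mul_of_nonneg_left (lip_sin _ _) (by positivity)
        _ = |m| / ω * (ω * |x - y|) := by
            rw [show ω * x - ω * y = ω * (x - y) by ring, abs_mul, abs_of_pos hωpos]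
        _ = |m| * |x - y| := by
            field_simp
            try ring
    have hcxy : |m * Real.cos (ω * x) - m * Real.cos (ω * y)| ≤ |m| * ω * |x - y| := by
      rw [← mul_sub, abs_mul]
      calc |m| * |Real.cos (ω * x) - Real.cos (ω * y)| ≤ |m| * |ω * x - ω * y| :=
            mul_le_mul_of_nonneg_left (lip_cos _ _) (abs_nonneg m)
        _ = |m| * (ω * |x - y|) := by
            rw [show ω * x - ω * y = ω * (x - y) by ring, abs_mul, abs_of_pos hωpos]
        _ = |m| * ω * |x - y| := by ring
    -- decomposition
    have key : (p • (p • deriv (deriv γ) A) + (m * Real.cos (ω * x)) • deriv γ A) -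
        (q • (q • deriv (deriv γ) B) + (m * Real.cos (ω * y)) • deriv γ B) =
        (m * Real.cos (ω * x) - m * Real.cos (ω * y)) • deriv γ A +
        (m * Real.cos (ω * y)) • (deriv γ A - deriv γ B) +
        ((p * p - q * q) • deriv (deriv γ) A + (q * q) • (deriv (deriv γ) A - deriv (deriv γ) B)) := by
      simp only [smul_smul, sub_smul, smul_sub]
      abel
    simp only [hD2]
    rw [← hAdef, ← hBdef, ← hpdef, ← hqdef, key]
    have b1 : ‖(m * Real.cos (ω * x) - m * Real.cos (ω * y)) • deriv γ A‖ ≤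
        |m| * ω * (L ^ ((1:ℝ)/2) * r) := by
      rw [norm_smul, Real.norm_eq_abs, hunit A hA, mul_one]
      calc |m * Real.cos (ω * x) - m * Real.cos (ω * y)| ≤ |m| * ω * |x - y| := hcxy
        _ ≤ |m| * ω * (L ^ ((1:ℝ)/2) * r) :=
            mul_le_mul_of_nonneg_left hsq (by positivity)
    have b2 : ‖(m * Real.cos (ω * y)) • (deriv γ A - deriv γ B)‖ ≤
        3/2 * |m| * Mν * (L ^ ((1:ℝ)/2) * r) := by
      rw [norm_smul, Real.norm_eq_abs]
      have h1 : |m * Real.cos (ω * y)| ≤ |m| := by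
        rw [abs_mul]
        calc |m| * |Real.cos (ω * y)| ≤ |m| * 1 := by gcongr; exact abs_cos_le_one' _
          _ = |m| := mul_one _
      calc |m * Real.cos (ω * y)| * ‖deriv γ A - deriv γ B‖ ≤ |m| * (Mν * |A - B|) :=
            mul_le_mul h1 (hτlip A hA B hB) (norm_nonneg _) (abs_nonneg _)
        _ ≤ |m| * (Mν * (3/2 * |x - y|)) :=
            mul_le_mul_of_nonneg_left (mul_le_mul_of_nonneg_left hab hMνnn) (abs_nonneg m)
        _ ≤ |m| * (Mν * (3/2 * (L ^ ((1:ℝ)/2) * r))) := by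
            have h9 : 3/2 * |x - y| ≤ 3/2 * (L ^ ((1:ℝ)/2) * r) := by linarith
            exact mul_le_mul_of_nonneg_left (mul_le_mul_of_nonneg_left h9 hMνnn) (abs_nonneg m)
        _ = 3/2 * |m| * Mν * (L ^ ((1:ℝ)/2) * r) := by ring
    have b3 : ‖(p * p - q * q) • deriv (deriv γ) A‖ ≤ 3 * |m| * Mν * (L ^ ((1:ℝ)/2) * r) := by
      rw [norm_smul, Real.norm_eq_abs]
      have h1 : |p * p - q * q| ≤ 3 * (|m| * |x - y|) := by
        have e1 : p * p - q * q = (p + q) * (p - q) := by ring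
        rw [e1, abs_mul]
        have h2 : |p + q| ≤ 3 := by
          rw [abs_of_pos (by have := hφd_pos x; have := hφd_pos y; rw [hpdef, hqdef]; linarith)]
          have := hφd_ub x; have := hφd_ub y
          rw [hpdef, hqdef]; linarith
        exact mul_le_mul h2 hpq (abs_nonneg _) (by norm_num)
      calc |p * p - q * q| * ‖deriv (deriv γ) A‖ ≤ 3 * (|m| * |x - y|) * Mν :=
            mul_le_mul h1 (hMν' A hA) (norm_nonneg _) (by positivity)
        _ ≤ 3 * (|m| * (L ^ ((1:ℝ)/2) * r)) * Mν := by
            have h9 : |m| * |x - y| ≤ |m| * (L ^ ((1:ℝ)/2) * r) :=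
              mul_le_mul_of_nonneg_left hsq (abs_nonneg m)
            nlinarith
        _ = 3 * |m| * Mν * (L ^ ((1:ℝ)/2) * r) := by ring
    have b4 : ‖(q * q) • (deriv (deriv γ) A - deriv (deriv γ) B)‖ ≤
        (9/4) * ((3/2) ^ ((1:ℝ)/2)) * G * r := by
      rw [norm_smul, Real.norm_eq_abs]
      have h1 : |q * q| ≤ 9/4 := by
        have h2 := hφd_pos y; have h3 := hφd_ub y
        rw [abs_of_pos (by rw [hqdef]; nlinarith)]
        rw [hqdef]; nlinarith
      have h4 : ‖deriv (deriv γ) A - deriv (deriv γ) B‖ ≤ G * ((3/2) ^ ((1:ℝ)/2) * r) := by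
        refine (hνhold A hA B hB).trans ?_
        refine mul_le_mul_of_nonneg_left ?_ hGnn
        calc |A - B| ^ ((1:ℝ)/2) ≤ (3/2 * |x - y|) ^ ((1:ℝ)/2) :=
              Real.rpow_le_rpow (abs_nonneg _) hab (by norm_num)
          _ = (3/2) ^ ((1:ℝ)/2) * r := by
              rw [Real.mul_rpow (by norm_num) (abs_nonneg _), hrdef]
      calc |q * q| * ‖deriv (deriv γ) A - deriv (deriv γ) B‖ ≤
            (9/4) * (G * ((3/2) ^ ((1:ℝ)/2) * r)) := by
            apply mul_le_mul h1 h4 (norm_nonneg _) (by norm_num)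
        _ = (9/4) * ((3/2) ^ ((1:ℝ)/2)) * G * r := by ring
    have tri : ‖(m * Real.cos (ω * x) - m * Real.cos (ω * y)) • deriv γ A +
        (m * Real.cos (ω * y)) • (deriv γ A - deriv γ B) +
        ((p * p - q * q) • deriv (deriv γ) A +
          (q * q) • (deriv (deriv γ) A - deriv (deriv γ) B))‖ ≤
        ‖(m * Real.cos (ω * x) - m * Real.cos (ω * y)) • deriv γ A‖ +
        ‖(m * Real.cos (ω * y)) • (deriv γ A - deriv γ B)‖ +
        (‖(p * p - q * q) • deriv (deriv γ) A‖ +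
          ‖(q * q) • (deriv (deriv γ) A - deriv (deriv γ) B)‖) := by
      refine (norm_add_le _ _).trans ?_
      gcongr
      · exact norm_add_le _ _
      · exact norm_add_le _ _
    rw [show |x - y| ^ ((1:ℝ)/2) = r from hrdef.symm]
    refine tri.trans ?_
    have hC2C : C2 ≤ C := by rw [hCdef]; have := le_max_right C1 C2; linarith
    have final : C2 * r ≤ C * r := mul_le_mul_of_nonneg_right hC2C hr0
    rw [hC2def] at final
    have expand : (|m| * ω * L ^ ((1:ℝ)/2) + 3/2 * |m| * Mν * L ^ ((1:ℝ)/2) +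
        3 * |m| * Mν * L ^ ((1:ℝ)/2) + 9/4 * (3/2) ^ ((1:ℝ)/2) * G) * r =
        |m| * ω * (L ^ ((1:ℝ)/2) * r) + 3/2 * |m| * Mν * (L ^ ((1:ℝ)/2) * r) +
        3 * |m| * Mν * (L ^ ((1:ℝ)/2) * r) + 9/4 * (3/2) ^ ((1:ℝ)/2) * G * r := by ring
    rw [expand] at final
    linarith


end
end
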